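/- arXiv:2405.09206 — 7 statements merged into one kernel-verified Lean document; each statement's English description precedes it below -/
import Mathlib

section
/- Let a, b : [0,1] → ℝ be continuous functions with 0 ≤ a(t) ≤ b(t) ≤ 1 for all t, and let A ⊆ (0,1) be a measurable set that splits intervals, i.e. for every nontrivial interval I ⊆ [0,1] both A ∩ I and I \ A have positive Lebesgue measure. Define f : [0,1] → ℝ by f(x) = ∫₀ˣ (a(t)·1_A(t) + b(t)·1_{[0,1]\A}(t)) dt. Then f is 1-Lipschitz and for every x ∈ (0,1) the Clarke subdifferential of f at x equals the interval [a(x), b(x)]. -/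
open Set Filter MeasureTheory Metric Topology NNReal

lemma aux_intInt (g : ℝ → ℝ) (hmeas : Measurable g) (hbd : ∀ t, ‖g t‖ ≤ 1) :
    ∀ u v : ℝ, IntervalIntegrable g volume u v := by
  intro u v
  constructor <;>
  exact (integrableOn_const (C := (1:ℝ)) measure_Ioc_lt_top.ne).mono'
    hmeas.aestronglyMeasurable (ae_of_all _ fun t => hbd t)

lemma aux_loc (g : ℝ → ℝ) (hmeas : Measurable g) (hbd : ∀ t, ‖g t‖ ≤ 1) :
    LocallyIntegrable g volume := by
  intro x
  exact ⟨closedBall x 1, closedBall_mem_nhds x one_pos,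
    (integrableOn_const (C := (1:ℝ)) (measure_closedBall_lt_top).ne).mono'
      hmeas.aestronglyMeasurable (ae_of_all _ fun t => hbd t)⟩

lemma aux_ae_deriv (g : ℝ → ℝ) (hmeas : Measurable g) (hbd : ∀ t, ‖g t‖ ≤ 1) :
    ∀ᵐ x, HasDerivAt (fun y => ∫ t in (0:ℝ)..y, g t) (g x) x := by
  have hInt := aux_intInt g hmeas hbd
  filter_upwards [IsUnifLocDoublingMeasure.ae_tendsto_average
    (μ := (volume : Measure ℝ)) (aux_loc g hmeas hbd) 1] with x hx
  rw [hasDerivAt_iff_tendsto_slope, ← nhdsLT_sup_nhdsGT, tendsto_sup]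
  have hsub : ∀ p q : ℝ,
      (∫ t in (0:ℝ)..q, g t) - (∫ t in (0:ℝ)..p, g t) = ∫ t in p..q, g t :=
    fun p q => intervalIntegral.integral_interval_sub_left (hInt 0 q) (hInt 0 p)
  constructor
  · -- left side
    have hδ : Tendsto (fun y => (x - y)/2) (𝓝[<] x) (𝓝[>] 0) := by
      rw [tendsto_nhdsWithin_iff]
      constructor
      · have : Tendsto (fun y => (x - y)/2) (𝓝 x) (𝓝 ((x - x)/2)) := by
          exact ((tendsto_const_nhds.sub tendsto_id).div_const 2)
        simpa using this.mono_left nhdsWithin_le_nhds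
      · filter_upwards [self_mem_nhdsWithin] with y (hy : y < x)
        have : (0:ℝ) < (x - y)/2 := by linarith
        exact this
    have hmem : ∀ᶠ y in 𝓝[<] x, x ∈ closedBall ((x+y)/2) (1 * ((x - y)/2)) := by
      filter_upwards [self_mem_nhdsWithin] with y (hy : y < x)
      simp only [mem_closedBall, Real.dist_eq, one_mul]
      rw [abs_le]; constructor <;> [linarith; linarith]
    have htend := hx (fun y => (x+y)/2) (fun y => (x - y)/2) hδ hmem
    apply htend.congr'
    filter_upwards [self_mem_nhdsWithin] with y (hy : y < x)
    have hball : closedBall ((x+y)/2) ((x - y)/2) = Icc y x := by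
      rw [Real.closedBall_eq_Icc]; congr 1 <;> ring
    rw [setAverage_eq, hball, measureReal_def, Real.volume_Icc, integral_Icc_eq_integral_Ioc,
      ← intervalIntegral.integral_of_le hy.le, slope_def_field]
    rw [← hsub y x, ENNReal.toReal_ofReal (by linarith), smul_eq_mul]
    have hxy : x - y ≠ 0 := by intro h; linarith [sub_eq_zero.1 h]
    have hxy' : y - x ≠ 0 := by intro h; linarith [sub_eq_zero.1 h]
    field_simp
    ring
  · -- right side
    have hδ : Tendsto (fun y => (y - x)/2) (𝓝[>] x) (𝓝[>] 0) := by
      rw [tendsto_nhdsWithin_iff]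
      constructor
      · have : Tendsto (fun y => (y - x)/2) (𝓝 x) (𝓝 ((x - x)/2)) := by
          exact ((tendsto_id.sub tendsto_const_nhds).div_const 2)
        simpa using this.mono_left nhdsWithin_le_nhds
      · filter_upwards [self_mem_nhdsWithin] with y (hy : x < y)
        have : (0:ℝ) < (y - x)/2 := by linarith
        exact this
    have hmem : ∀ᶠ y in 𝓝[>] x, x ∈ closedBall ((x+y)/2) (1 * ((y - x)/2)) := by
      filter_upwards [self_mem_nhdsWithin] with y (hy : x < y)
      simp only [mem_closedBall, Real.dist_eq, one_mul]
      rw [abs_le]; constructor <;> [linarith; linarith]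
    have htend := hx (fun y => (x+y)/2) (fun y => (y - x)/2) hδ hmem
    apply htend.congr'
    filter_upwards [self_mem_nhdsWithin] with y (hy : x < y)
    have hball : closedBall ((x+y)/2) ((y - x)/2) = Icc x y := by
      rw [Real.closedBall_eq_Icc]; congr 1 <;> ring
    rw [setAverage_eq, hball, measureReal_def, Real.volume_Icc, integral_Icc_eq_integral_Ioc,
      ← intervalIntegral.integral_of_le hy.le, slope_def_field]
    rw [← hsub x y, ENNReal.toReal_ofReal (by linarith), smul_eq_mul]
    have hxy : y - x ≠ 0 := by intro h; linarith [sub_eq_zero.1 h]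
    have hxy' : x - y ≠ 0 := by intro h; linarith [sub_eq_zero.1 h]
    field_simp


/-- The Clarke subdifferential of a (Lipschitz) function `f : ℝ → ℝ` at `x`: the convex hull
of all limits of derivatives `f'(xₙ)` along sequences of differentiability points `xₙ → x`. -/
noncomputable def clarke (f : ℝ → ℝ) (x : ℝ) : Set ℝ :=
  convexHull ℝ {p : ℝ | ∃ u : ℕ → ℝ, (∀ n, DifferentiableAt ℝ f (u n)) ∧
    Tendsto u atTop (nhds x) ∧ Tendsto (fun n => deriv f (u n)) atTop (nhds p)}

/-- If `a, b` are continuous on `[0,1]` with `0 ≤ a ≤ b ≤ 1`, `A ⊆ (0,1)` is a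
measurable set splitting all nontrivial subintervals of `[0,1]`, and
`f(x) = ∫₀ˣ (a·1_A + b·1_{[0,1]∖A})`, then `f` is `1`-Lipschitz on `[0,1]` and
`∂f(x) = [a(x), b(x)]` for every `x ∈ (0,1)`. -/
theorem stmt_1 (a b : ℝ → ℝ) (ha : ContinuousOn a (Icc 0 1)) (hb : ContinuousOn b (Icc 0 1))
    (hab : ∀ t ∈ Icc (0:ℝ) 1, 0 ≤ a t ∧ a t ≤ b t ∧ b t ≤ 1)
    (A : Set ℝ) (hA : MeasurableSet A) (hA1 : A ⊆ Ioo 0 1)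
    (hsplit : ∀ c d : ℝ, 0 ≤ c → c < d → d ≤ 1 →
      0 < volume (A ∩ Ioo c d) ∧ 0 < volume (Ioo c d \ A))
    (f : ℝ → ℝ)
    (hf : ∀ x : ℝ, f x = ∫ t in (0:ℝ)..x,
      (a t * A.indicator (fun _ => (1:ℝ)) t
        + b t * (Icc (0:ℝ) 1 \ A).indicator (fun _ => (1:ℝ)) t)) :
    LipschitzOnWith 1 f (Icc 0 1) ∧
      ∀ x ∈ Ioo (0:ℝ) 1, clarke f x = Icc (a x) (b x) := by
  classical
  set π : ℝ → ℝ := fun t => max 0 (min t 1) with hπdef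
  have hπcont : Continuous π := continuous_const.max (continuous_id.min continuous_const)
  have hπmem : ∀ t, π t ∈ Icc (0:ℝ) 1 :=
    fun t => ⟨le_max_left _ _, max_le (by norm_num) (min_le_right _ _)⟩
  have hπeq : ∀ t ∈ Icc (0:ℝ) 1, π t = t := fun t ht => by
    simp only [hπdef, min_eq_left ht.2, max_eq_right ht.1]
  set a' : ℝ → ℝ := fun t => a (π t) with ha'def
  set b' : ℝ → ℝ := fun t => b (π t) with hb'def
  have ha'c : Continuous a' := ha.comp_continuous hπcont hπmem
  have hb'c : Continuous b' := hb.comp_continuous hπcont hπmem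
  have ha'eq : ∀ t ∈ Icc (0:ℝ) 1, a' t = a t := fun t ht => by
    simp only [ha'def, hπeq t ht]
  have hb'eq : ∀ t ∈ Icc (0:ℝ) 1, b' t = b t := fun t ht => by
    simp only [hb'def, hπeq t ht]
  set g : ℝ → ℝ := fun t => A.indicator a' t + (Icc 0 1 \ A).indicator b' t with hgdef
  have hAIcc : A ⊆ Icc (0:ℝ) 1 := hA1.trans Ioo_subset_Icc_self
  have hgA : ∀ t ∈ A, g t = a t := by
    intro t ht
    simp only [hgdef, indicator_of_mem ht, indicator_of_notMem (fun h : t ∈ _ \ A => h.2 ht),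
      add_zero, ha'eq t (hAIcc ht)]
  have hgB : ∀ t ∈ Icc (0:ℝ) 1 \ A, g t = b t := by
    intro t ht
    simp only [hgdef, indicator_of_mem ht, indicator_of_notMem ht.2, zero_add,
      hb'eq t ht.1]
  have hgO : ∀ t, t ∉ Icc (0:ℝ) 1 → g t = 0 := by
    intro t ht
    have h1 : t ∉ A := fun h => ht (hAIcc h)
    have h2 : t ∉ Icc (0:ℝ) 1 \ A := fun h => ht h.1
    simp only [hgdef, indicator_of_notMem h1, indicator_of_notMem h2, add_zero]
  have hgmeas : Measurable g :=
    (ha'c.measurable.indicator hA).add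
      (hb'c.measurable.indicator (measurableSet_Icc.diff hA))
  have hg01 : ∀ t, 0 ≤ g t ∧ g t ≤ 1 := by
    intro t
    by_cases h1 : t ∈ A
    · rw [hgA t h1]
      obtain ⟨u1, u2, u3⟩ := hab t (hAIcc h1)
      exact ⟨u1, u2.trans u3⟩
    · by_cases h2 : t ∈ Icc (0:ℝ) 1
      · rw [hgB t ⟨h2, h1⟩]
        obtain ⟨u1, u2, u3⟩ := hab t h2
        exact ⟨u1.trans u2, u3⟩
      · rw [hgO t h2]; norm_num
  have hgbd : ∀ t, ‖g t‖ ≤ 1 := fun t => by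
    rw [Real.norm_eq_abs, abs_le]
    exact ⟨by linarith [(hg01 t).1], (hg01 t).2⟩
  have hf' : ∀ y, f y = ∫ t in (0:ℝ)..y, g t := by
    intro y
    rw [hf y]
    congr 1
    funext t
    by_cases h1 : t ∈ A
    · have h2 : t ∉ Icc (0:ℝ) 1 \ A := fun h => h.2 h1
      rw [indicator_of_mem h1, indicator_of_notMem h2, hgA t h1]; ring
    · by_cases h2 : t ∈ Icc (0:ℝ) 1
      · have h3 : t ∈ Icc (0:ℝ) 1 \ A := ⟨h2, h1⟩
        rw [indicator_of_notMem h1, indicator_of_mem h3, hgB t h3]; ring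
      · have h3 : t ∉ Icc (0:ℝ) 1 \ A := fun h => h2 h.1
        rw [indicator_of_notMem h1, indicator_of_notMem h3, hgO t h2]; ring
  have hInt := aux_intInt g hgmeas hgbd
  have hfsub : ∀ p q : ℝ, f q - f p = ∫ t in p..q, g t := fun p q => by
    rw [hf' p, hf' q]
    exact intervalIntegral.integral_interval_sub_left (hInt 0 q) (hInt 0 p)
  have hlip : LipschitzWith 1 f := by
    apply LipschitzWith.of_dist_le_mul
    intro p q
    calc dist (f p) (f q) = ‖∫ t in q..p, g t‖ := by
          rw [Real.dist_eq, ← hfsub q p, Real.norm_eq_abs]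
      _ ≤ 1 * |p - q| := intervalIntegral.norm_integral_le_of_norm_le_const fun t _ => hgbd t
      _ = ((1:ℝ≥0):ℝ) * dist p q := by rw [Real.dist_eq]; norm_num
  refine ⟨hlip.lipschitzOnWith, ?_⟩
  have hae : ∀ᵐ t, HasDerivAt f (g t) t := by
    have h0 := aux_ae_deriv g hgmeas hgbd
    have hfeq : f = fun y => ∫ t in (0:ℝ)..y, g t := funext hf'
    rw [hfeq]
    exact h0
  intro x hx
  have hxIcc : x ∈ Icc (0:ℝ) 1 := Ioo_subset_Icc_self hx
  apply Subset.antisymm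
  · -- clarke ⊆ Icc
    show convexHull ℝ _ ⊆ Icc (a x) (b x)
    apply convexHull_min ?_ (convex_Icc _ _)
    rintro p ⟨u, hdiff, hut, hdt⟩
    have key : ∀ ε : ℝ, 0 < ε →
        ∀ᶠ n in atTop, a x - ε ≤ deriv f (u n) ∧ deriv f (u n) ≤ b x + ε := by
      intro ε hε
      obtain ⟨δa, hδa, hda⟩ := Metric.continuousAt_iff.1 (ha'c.continuousAt (x := x)) ε hε
      obtain ⟨δb, hδb, hdb⟩ := Metric.continuousAt_iff.1 (hb'c.continuousAt (x := x)) ε hε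
      set δ := min δa δb with hδdef
      have hδ : 0 < δ := lt_min hδa hδb
      have hgbound : ∀ t ∈ Ioo (0:ℝ) 1, |t - x| < δ → a x - ε ≤ g t ∧ g t ≤ b x + ε := by
        intro t ht hdist
        have htIcc : t ∈ Icc (0:ℝ) 1 := Ioo_subset_Icc_self ht
        have h1 : |a t - a x| < ε := by
          have := hda (show dist t x < δa by
            rw [Real.dist_eq]; exact lt_of_lt_of_le hdist (min_le_left _ _))
          rwa [Real.dist_eq, ha'eq t htIcc, ha'eq x hxIcc] at this
        have h2 : |b t - b x| < ε := by
          have := hdb (show dist t x < δb by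
            rw [Real.dist_eq]; exact lt_of_lt_of_le hdist (min_le_right _ _))
          rwa [Real.dist_eq, hb'eq t htIcc, hb'eq x hxIcc] at this
        rw [abs_lt] at h1 h2
        obtain ⟨w1, w2, w3⟩ := hab t htIcc
        have hcase : g t = a t ∨ g t = b t := by
          by_cases h : t ∈ A
          · exact Or.inl (hgA t h)
          · exact Or.inr (hgB t ⟨htIcc, h⟩)
        rcases hcase with h | h <;> rw [h] <;> constructor <;> linarith
      have hev1 : ∀ᶠ n in atTop, u n ∈ Ioo (0:ℝ) 1 :=
        hut.eventually (isOpen_Ioo.eventually_mem hx)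
      have hev2 : ∀ᶠ n in atTop, dist (u n) x < δ/2 :=
        hut.eventually (Metric.ball_mem_nhds x (by positivity))
      filter_upwards [hev1, hev2] with n hn1 hn2
      -- bound on deriv f (u n)
      set u0 := u n with hu0def
      have hu0d : |u0 - x| < δ/2 := by rwa [Real.dist_eq] at hn2
      have hderiv := (hdiff n).hasDerivAt
      rw [hasDerivAt_iff_tendsto_slope] at hderiv
      have hright : Tendsto (slope f u0) (𝓝[>] u0) (𝓝 (deriv f u0)) :=
        hderiv.mono_left (nhdsWithin_mono u0 fun y hy => hy.ne')
      set η := min (δ/2) (1 - u0) with hηdef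
      have hηpos : 0 < η := lt_min (by positivity) (by linarith [hn1.2])
      have hev : ∀ᶠ y in 𝓝[>] u0,
          a x - ε ≤ slope f u0 y ∧ slope f u0 y ≤ b x + ε := by
        filter_upwards [Ioo_mem_nhdsGT (show u0 < u0 + η by linarith)] with y hy
        obtain ⟨hy1, hy2⟩ := hy
        have hsub1 : ∀ t ∈ Icc u0 y, t ∈ Ioo (0:ℝ) 1 ∧ |t - x| < δ := by
          intro t ht
          have hηa : η ≤ δ/2 := min_le_left _ _
          have hηb : η ≤ 1 - u0 := min_le_right _ _
          have h01 : 0 < t := lt_of_lt_of_le hn1.1 ht.1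
          have h1t : t < 1 := by
            have := ht.2; linarith
          have hd : |t - x| < δ := by
            rw [abs_lt]; rw [abs_lt] at hu0d
            constructor
            · linarith [ht.1]
            · linarith [ht.2]
          exact ⟨⟨h01, h1t⟩, hd⟩
        have hyu : (0:ℝ) < y - u0 := by linarith
        have hlo : (a x - ε) * (y - u0) ≤ ∫ t in u0..y, g t := by
          have h := intervalIntegral.integral_mono_on hy1.le
            (intervalIntegrable_const (c := a x - ε)) (hInt u0 y)
            (fun t ht => (hgbound t (hsub1 t ht).1 (hsub1 t ht).2).1)
          rw [intervalIntegral.integral_const, smul_eq_mul] at h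
          linarith [h]
        have hhi : (∫ t in u0..y, g t) ≤ (b x + ε) * (y - u0) := by
          have h := intervalIntegral.integral_mono_on hy1.le (hInt u0 y)
            (intervalIntegrable_const (c := b x + ε))
            (fun t ht => (hgbound t (hsub1 t ht).1 (hsub1 t ht).2).2)
          rw [intervalIntegral.integral_const, smul_eq_mul] at h
          linarith [h]
        rw [slope_def_field, hfsub u0 y]
        constructor
        · rw [le_div_iff₀ hyu]; exact hlo
        · rw [div_le_iff₀ hyu]; exact hhi
      exact ⟨ge_of_tendsto hright (hev.mono fun y h => h.1),
        le_of_tendsto hright (hev.mono fun y h => h.2)⟩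
    constructor
    · refine le_of_forall_pos_le_add fun ε hε => ?_
      have h1 : a x - ε ≤ p :=
        ge_of_tendsto hdt ((key ε hε).mono fun n h => h.1)
      linarith
    · refine le_of_forall_pos_le_add fun ε hε => ?_
      exact le_of_tendsto hdt ((key ε hε).mono fun n h => h.2)
  · -- Icc ⊆ clarke
    have hNull : volume {t | ¬ HasDerivAt f (g t) t} = 0 := ae_iff.1 hae
    have hpickA : ∀ n : ℕ, ∃ t, t ∈ A ∧ HasDerivAt f (g t) t ∧ |t - x| < 1/(n+1) := by
      intro n
      set c := max 0 (x - 1/(n+1)) with hcdef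
      set d := min 1 (x + 1/(n+1)) with hddef
      have hn : (0:ℝ) < 1/(n+1) := by positivity
      have hcx : c < x := max_lt hx.1 (by linarith)
      have hxd : x < d := lt_min hx.2 (by linarith)
      obtain ⟨h1, _⟩ := hsplit c d (le_max_left _ _) (hcx.trans hxd) (min_le_left _ _)
      have h2 : volume ((A ∩ Ioo c d) \ {t | ¬ HasDerivAt f (g t) t}) ≠ 0 := by
        rw [measure_diff_null hNull]; exact h1.ne'
      obtain ⟨t, ⟨⟨htA, htIoo⟩, htD⟩⟩ := nonempty_of_measure_ne_zero h2
      refine ⟨t, htA, not_not.1 htD, ?_⟩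
      rw [abs_lt]
      have hc' : x - 1/(n+1) ≤ c := le_max_right _ _
      have hd' : d ≤ x + 1/(n+1) := min_le_right _ _
      exact ⟨by linarith [htIoo.1], by linarith [htIoo.2]⟩
    have hpickB : ∀ n : ℕ, ∃ t, t ∈ Icc (0:ℝ) 1 \ A ∧ HasDerivAt f (g t) t ∧
        |t - x| < 1/(n+1) := by
      intro n
      set c := max 0 (x - 1/(n+1)) with hcdef
      set d := min 1 (x + 1/(n+1)) with hddef
      have hn : (0:ℝ) < 1/(n+1) := by positivity
      have hcx : c < x := max_lt hx.1 (by linarith)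
      have hxd : x < d := lt_min hx.2 (by linarith)
      obtain ⟨_, h1⟩ := hsplit c d (le_max_left _ _) (hcx.trans hxd) (min_le_left _ _)
      have h2 : volume ((Ioo c d \ A) \ {t | ¬ HasDerivAt f (g t) t}) ≠ 0 := by
        rw [measure_diff_null hNull]; exact h1.ne'
      obtain ⟨t, ⟨⟨htIoo, htA⟩, htD⟩⟩ := nonempty_of_measure_ne_zero h2
      have htIcc : t ∈ Icc (0:ℝ) 1 := by
        constructor
        · exact le_trans (le_max_left _ _) htIoo.1.le
        · exact le_trans htIoo.2.le (min_le_left _ _)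
      refine ⟨t, ⟨htIcc, htA⟩, not_not.1 htD, ?_⟩
      rw [abs_lt]
      have hc' : x - 1/(n+1) ≤ c := le_max_right _ _
      have hd' : d ≤ x + 1/(n+1) := min_le_right _ _
      exact ⟨by linarith [htIoo.1], by linarith [htIoo.2]⟩
    have hlim : ∀ u : ℕ → ℝ, (∀ n, |u n - x| < 1/(n+1)) → Tendsto u atTop (𝓝 x) := by
      intro u hu
      rw [tendsto_iff_dist_tendsto_zero]
      apply squeeze_zero (fun n => dist_nonneg) (fun n => ?_)
        tendsto_one_div_add_atTop_nhds_zero_nat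
      rw [Real.dist_eq]
      exact (hu n).le
    have hmema : a x ∈ {p : ℝ | ∃ u : ℕ → ℝ, (∀ n, DifferentiableAt ℝ f (u n)) ∧
        Tendsto u atTop (𝓝 x) ∧ Tendsto (fun n => deriv f (u n)) atTop (𝓝 p)} := by
      choose u hu1 hu2 hu3 using hpickA
      have hutend := hlim u hu3
      refine ⟨u, fun n => (hu2 n).differentiableAt, hutend, ?_⟩
      have hda : ∀ n, deriv f (u n) = a' (u n) := by
        intro n
        rw [(hu2 n).deriv, hgA _ (hu1 n), ← ha'eq _ (hAIcc (hu1 n))]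
      have hcomp : Tendsto (fun n => a' (u n)) atTop (𝓝 (a' x)) :=
        (ha'c.tendsto x).comp hutend
      rw [ha'eq x hxIcc] at hcomp
      exact hcomp.congr fun n => (hda n).symm
    have hmemb : b x ∈ {p : ℝ | ∃ u : ℕ → ℝ, (∀ n, DifferentiableAt ℝ f (u n)) ∧
        Tendsto u atTop (𝓝 x) ∧ Tendsto (fun n => deriv f (u n)) atTop (𝓝 p)} := by
      choose u hu1 hu2 hu3 using hpickB
      have hutend := hlim u hu3
      refine ⟨u, fun n => (hu2 n).differentiableAt, hutend, ?_⟩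
      have hdb : ∀ n, deriv f (u n) = b' (u n) := by
        intro n
        rw [(hu2 n).deriv, hgB _ (hu1 n), ← hb'eq _ (hu1 n).1]
      have hcomp : Tendsto (fun n => b' (u n)) atTop (𝓝 (b' x)) :=
        (hb'c.tendsto x).comp hutend
      rw [hb'eq x hxIcc] at hcomp
      exact hcomp.congr fun n => (hdb n).symm
    have hconv : Convex ℝ (clarke f x) := convex_convexHull ℝ _
    exact hconv.ordConnected.out (subset_convexHull ℝ _ hmema) (subset_convexHull ℝ _ hmemb)
end

section
/- There exists a function f : ℝ → ℝ which is 1-Lipschitz (with Lipschitz constant exactly 1) such that for every pair of real numbers a, b with −1 ≤ a ≤ b ≤ 1 there exists x ∈ (0,1) for which the Clarke subdifferential of f at x equals the closed interval [a, b]. -/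
open Set Filter

namespace Stmt2
open Topology
noncomputable section

/-! ### Digit sums -/

/-- generic digit sum -/
def dsum (c r : ℝ) (d : ℕ → Bool) : ℝ := ∑' j, if d j then c * r ^ j else 0

variable {c r : ℝ}

lemma term_nonneg (hc : 0 ≤ c) (hr : 0 ≤ r) (d : ℕ → Bool) (j : ℕ) :
    0 ≤ (if d j then c * r ^ j else 0) := by
  split
  · positivity
  · exact le_refl _

lemma term_le (hc : 0 ≤ c) (hr : 0 ≤ r) (d : ℕ → Bool) (j : ℕ) :
    (if d j then c * r ^ j else 0) ≤ c * r ^ j := by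
  split
  · exact le_refl _
  · positivity

lemma summable_geom (hc : 0 ≤ c) (hr0 : 0 ≤ r) (hr1 : r < 1) :
    Summable (fun j : ℕ => c * r ^ j) :=
  (summable_geometric_of_lt_one hr0 hr1).mul_left c

lemma summable_term (hc : 0 ≤ c) (hr0 : 0 ≤ r) (hr1 : r < 1) (d : ℕ → Bool) :
    Summable (fun j => if d j then c * r ^ j else 0) :=
  Summable.of_nonneg_of_le (term_nonneg hc hr0 d) (term_le hc hr0 d)
    (summable_geom hc hr0 hr1)

lemma dsum_nonneg (hc : 0 ≤ c) (hr0 : 0 ≤ r) (d : ℕ → Bool) : 0 ≤ dsum c r d :=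
  tsum_nonneg (term_nonneg hc hr0 d)

/-- tail geometric sum -/
lemma hasSum_tail (hc : 0 ≤ c) (hr0 : 0 ≤ r) (hr1 : r < 1) (n : ℕ) :
    HasSum (fun j : ℕ => if n ≤ j then c * r ^ j else 0) (c * r ^ n / (1 - r)) := by
  have base : HasSum (fun k : ℕ => c * r ^ n * r ^ k) (c * r ^ n * (1 - r)⁻¹) :=
    (hasSum_geometric_of_lt_one hr0 hr1).mul_left _
  have hinj : Function.Injective (fun k : ℕ => n + k) := fun a b h => by simpa using h
  have hvan : ∀ j ∉ Set.range (fun k : ℕ => n + k),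
      (if n ≤ j then c * r ^ j else 0) = 0 := by
    intro j hj
    have : ¬ n ≤ j := by
      intro h
      exact hj ⟨j - n, by simp; omega⟩
    simp [this]
  rw [div_eq_mul_inv]
  rw [← Function.Injective.hasSum_iff hinj hvan]
  convert base using 1
  funext k
  simp [Function.comp, pow_add, mul_assoc]

lemma abs_tsum_le {f g : ℕ → ℝ} (h : ∀ j, |f j| ≤ g j) (hg : Summable g) :
    |∑' j, f j| ≤ ∑' j, g j := by
  have hf : Summable fun j => |f j| :=
    Summable.of_nonneg_of_le (fun j => abs_nonneg _) h hg
  have h1 : ‖∑' j, f j‖ ≤ ∑' j, ‖f j‖ :=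
    norm_tsum_le_tsum_norm (by simpa [Real.norm_eq_abs] using hf)
  rw [Real.norm_eq_abs] at h1
  refine h1.trans ?_
  have h2 : ∀ j, ‖f j‖ = |f j| := fun j => Real.norm_eq_abs _
  calc (∑' j, ‖f j‖) = ∑' j, |f j| := by simp [h2]
    _ ≤ ∑' j, g j := Summable.tsum_le_tsum h hf hg

lemma term_sub_abs_le (hc : 0 ≤ c) (hr0 : 0 ≤ r) (d d' : ℕ → Bool) (j : ℕ) :
    |(if d j then c * r ^ j else 0) - (if d' j then c * r ^ j else 0)| ≤ c * r ^ j := by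
  have h1 := term_nonneg hc hr0 d j
  have h2 := term_nonneg hc hr0 d' j
  have h3 := term_le hc hr0 d j
  have h4 := term_le hc hr0 d' j
  rw [abs_sub_le_iff]
  constructor <;> linarith

lemma dsum_cylinder (hc : 0 ≤ c) (hr0 : 0 ≤ r) (hr1 : r < 1) {d d' : ℕ → Bool} {n : ℕ}
    (h : ∀ j < n, d j = d' j) :
    |dsum c r d - dsum c r d'| ≤ c * r ^ n / (1 - r) := by
  rw [dsum, dsum, ← Summable.tsum_sub (summable_term hc hr0 hr1 d) (summable_term hc hr0 hr1 d')]
  refine (abs_tsum_le ?_ (hasSum_tail hc hr0 hr1 n).summable).trans_eq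
    (hasSum_tail hc hr0 hr1 n).tsum_eq
  intro j
  by_cases hj : n ≤ j
  · simp only [hj, if_true]
    exact term_sub_abs_le hc hr0 d d' j
  · rw [h j (lt_of_not_ge hj)]
    simp [hj]

lemma dsum_sep (hc : 0 ≤ c) (hr0 : 0 ≤ r) (hr1 : r < 1) {d d' : ℕ → Bool} {i : ℕ}
    (h : ∀ j < i, d j = d' j) (hi : d i = true) (hi' : d' i = false) :
    c * r ^ i - c * r ^ (i + 1) / (1 - r) ≤ dsum c r d - dsum c r d' := by
  have hsd := summable_term hc hr0 hr1 d
  have hsd' := summable_term hc hr0 hr1 d'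
  rw [dsum, dsum, ← Summable.tsum_sub hsd hsd']
  set Δ := fun j => ((if d j then c * r ^ j else 0) - (if d' j then c * r ^ j else 0)) with hΔdef
  have hΔ : Summable Δ := hsd.sub hsd'
  rw [Summable.tsum_eq_add_tsum_ite hΔ i]
  have hΔi : Δ i = c * r ^ i := by simp [hΔdef, hi, hi']
  have hrest : |∑' j, if j = i then 0 else Δ j| ≤ c * r ^ (i + 1) / (1 - r) := by
    refine (abs_tsum_le ?_ (hasSum_tail hc hr0 hr1 (i + 1)).summable).trans_eq
      (hasSum_tail hc hr0 hr1 (i + 1)).tsum_eq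
    intro j
    rcases lt_trichotomy j i with hj | hj | hj
    · have hΔj : Δ j = 0 := by simp [hΔdef, h j hj]
      have hji : j ≠ i := Nat.ne_of_lt hj
      have hij : ¬ (i + 1 ≤ j) := by omega
      simp [hji, hij, hΔj]
    · subst hj
      simp
    · have hji : j ≠ i := Nat.ne_of_gt hj
      have hij : i + 1 ≤ j := hj
      simp only [hji, if_false, hij, if_true]
      exact term_sub_abs_le hc hr0 d d' j
  have := (abs_le.mp hrest).1
  rw [hΔi]
  linarith

lemma dsum_mono (hc : 0 ≤ c) (hr0 : 0 ≤ r) (hr1 : r < 1) {d d' : ℕ → Bool}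
    (h : ∀ j, d j = true → d' j = true) : dsum c r d ≤ dsum c r d' := by
  refine Summable.tsum_le_tsum ?_ (summable_term hc hr0 hr1 d) (summable_term hc hr0 hr1 d')
  intro j
  by_cases hj : d j = true
  · rw [hj, h j hj]
  · simp only [Bool.not_eq_true] at hj
    rw [hj]
    simp only [Bool.false_eq_true, if_false]
    exact term_nonneg hc hr0 d' j

lemma dsum_le_full (hc : 0 ≤ c) (hr0 : 0 ≤ r) (hr1 : r < 1) (d : ℕ → Bool) :
    dsum c r d ≤ c / (1 - r) := by
  have h0 : (fun j : ℕ => if 0 ≤ j then c * r ^ j else 0) = fun j : ℕ => c * r ^ j := by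
    funext j; simp
  have := (hasSum_tail hc hr0 hr1 0).tsum_eq
  rw [h0] at this
  simp only [pow_zero, mul_one] at this
  rw [← this]
  exact Summable.tsum_le_tsum (term_le hc hr0 d) (summable_term hc hr0 hr1 d) (summable_geom hc hr0 hr1)

lemma dsum_all_true (hc : 0 ≤ c) (hr0 : 0 ≤ r) (hr1 : r < 1) :
    dsum c r (fun _ => true) = c / (1 - r) := by
  have h0 : (fun j : ℕ => if 0 ≤ j then c * r ^ j else 0) = fun j : ℕ => c * r ^ j := by
    funext j; simp
  have := (hasSum_tail hc hr0 hr1 0).tsum_eq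
  rw [h0] at this
  simp only [pow_zero, mul_one] at this
  rw [← this, dsum]
  simp

/-! ### The Cantor set -/

def enc (d : ℕ → Bool) : ℝ := 1/3 + dsum (2/9) (1/3) d

def theta (d : ℕ → Bool) : ℝ := dsum (1/2) (1/2) d

lemma c29 : (0:ℝ) ≤ 2/9 := by norm_num
lemma r13 : (0:ℝ) ≤ 1/3 := by norm_num
lemma r13' : (1/3:ℝ) < 1 := by norm_num
lemma c12 : (0:ℝ) ≤ 1/2 := by norm_num
lemma r12' : (1/2:ℝ) < 1 := by norm_num

lemma theta_mem (d : ℕ → Bool) : theta d ∈ Icc (0:ℝ) 1 := by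
  constructor
  · exact dsum_nonneg c12 c12 d
  · have := dsum_le_full c12 c12 r12' d
    norm_num at this
    exact this

lemma enc_mem (d : ℕ → Bool) : enc d ∈ Icc (1/3 : ℝ) (2/3) := by
  have h1 := dsum_nonneg c29 r13 d
  have h2 := dsum_le_full c29 r13 r13' d
  rw [enc]
  constructor <;> [linarith; (norm_num at h2 ⊢; linarith)]

lemma enc_sep {d d' : ℕ → Bool} {i : ℕ} (h : ∀ j < i, d j = d' j) (hne : d i ≠ d' i) :
    (1/3:ℝ) ^ (i + 2) ≤ |enc d - enc d'| := by
  have key : ∀ a b : ℕ → Bool, (∀ j < i, a j = b j) → a i = true → b i = false →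
      (1/3:ℝ) ^ (i + 2) ≤ enc a - enc b := by
    intro a b hab ha hb
    have := dsum_sep (c := 2/9) (r := 1/3) c29 r13 r13' hab ha hb
    have heq : (2/9 : ℝ) * (1/3) ^ i - (2/9) * (1/3) ^ (i+1) / (1 - 1/3) = (1/3) ^ (i+2) := by
      rw [pow_succ, pow_succ]
      ring
    rw [enc, enc]
    linarith [heq ▸ this]
  cases hd : d i
  · cases hd' : d' i
    · exact absurd (hd.trans hd'.symm) hne
    · have := key d' d (fun j hj => (h j hj).symm) hd' hd
      rw [abs_sub_comm]
      exact this.trans (le_abs_self _)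
  · cases hd' : d' i
    · exact (key d d' h hd hd').trans (le_abs_self _)
    · exact absurd (hd.trans hd'.symm) hne

lemma enc_inj : Function.Injective enc := by
  intro d d' hdd
  by_contra hne
  have : ∃ i, d i ≠ d' i := by
    by_contra hx
    push_neg at hx
    exact hne (funext hx)
  classical
  have hex : ∃ i, d i ≠ d' i := this
  have hi : d (Nat.find hex) ≠ d' (Nat.find hex) := Nat.find_spec hex
  have hmin : ∀ j < Nat.find hex, d j = d' j := fun j hj => by
    have := Nat.find_min hex hj
    simpa using this
  have hsep := enc_sep hmin hi
  rw [hdd, sub_self, abs_zero] at hsep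
  have hp : (0:ℝ) < (1/3:ℝ) ^ (Nat.find hex + 2) := by positivity
  linarith

def pre (d : ℕ → Bool) (n : ℕ) : ℕ → Bool := fun j => if j < n then d j else false

def preT (d : ℕ → Bool) (n : ℕ) : ℕ → Bool := fun j => if j < n then d j else true

lemma enc_pre_le (d : ℕ → Bool) (n : ℕ) : enc (pre d n) ≤ enc d := by
  have := dsum_mono (c := 2/9) (r := 1/3) c29 r13 r13'
    (d := pre d n) (d' := d) ?_
  · rw [enc, enc]; linarith
  · intro j hj
    by_cases h : j < n
    · simpa [pre, h] using hj
    · simp [pre, h] at hj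

lemma enc_le_preT (d : ℕ → Bool) (n : ℕ) : enc d ≤ enc (preT d n) := by
  have := dsum_mono (c := 2/9) (r := 1/3) c29 r13 r13'
    (d := d) (d' := preT d n) ?_
  · rw [enc, enc]; linarith
  · intro j hj
    by_cases h : j < n
    · simpa [preT, h] using hj
    · simp [preT, h]

lemma enc_sub_pre_le (d : ℕ → Bool) (n : ℕ) :
    enc d - enc (pre d n) ≤ (1/3:ℝ) ^ (n + 1) := by
  have := dsum_cylinder (c := 2/9) (r := 1/3) c29 r13 r13'
    (d := d) (d' := pre d n) (n := n) ?_
  · have heq : (2/9 : ℝ) * (1/3) ^ n / (1 - 1/3) = (1/3) ^ (n+1) := by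
      rw [pow_succ]; ring
    rw [enc, enc]
    have := (abs_le.mp this).2
    linarith [heq ▸ this]
  · intro j hj
    simp [pre, hj]

lemma enc_preT_sub_pre (d : ℕ → Bool) (n : ℕ) :
    enc (preT d n) - enc (pre d n) = (1/3:ℝ) ^ (n + 1) := by
  have hs1 := summable_term (d := preT d n) c29 r13 r13'
  have hs2 := summable_term (d := pre d n) c29 r13 r13'
  have key : enc (preT d n) - enc (pre d n)
      = ∑' j, if n ≤ j then (2/9:ℝ) * (1/3) ^ j else 0 := by
    rw [enc, enc, dsum, dsum]
    have : (1/3 + ∑' j, (if preT d n j then (2/9:ℝ) * (1/3) ^ j else 0))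
        - (1/3 + ∑' j, (if pre d n j then (2/9:ℝ) * (1/3) ^ j else 0))
        = ∑' j, ((if preT d n j then (2/9:ℝ) * (1/3) ^ j else 0)
            - (if pre d n j then (2/9:ℝ) * (1/3) ^ j else 0)) := by
      rw [Summable.tsum_sub hs1 hs2]
      ring
    rw [this]
    congr 1
    funext j
    by_cases hj : j < n
    · simp [pre, preT, hj, Nat.not_le.mpr hj]
    · simp [pre, preT, hj, Nat.le_of_not_lt hj]
  rw [key, (hasSum_tail c29 r13 r13' n).tsum_eq, pow_succ]
  ring

def CS : Set ℝ := Set.range enc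

lemma continuous_enc : Continuous enc := by
  rw [show enc = fun d => 1/3 + dsum (2/9) (1/3) d from rfl]
  refine Continuous.add continuous_const ?_
  refine continuous_tsum (fun j => ?_) (summable_geom c29 r13 r13') (fun j d => ?_)
  · have hb : Continuous (fun b : Bool => if b then (2/9:ℝ) * (1/3) ^ j else 0) :=
      continuous_of_discreteTopology
    exact hb.comp (continuous_apply j)
  · rw [Real.norm_eq_abs, abs_of_nonneg (term_nonneg c29 r13 d j)]
    exact term_le c29 r13 d j

lemma continuous_theta : Continuous theta := by
  refine continuous_tsum (fun j => ?_) (summable_geom c12 c12 r12') (fun j d => ?_)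
  · have hb : Continuous (fun b : Bool => if b then (1/2:ℝ) * (1/2) ^ j else 0) :=
      continuous_of_discreteTopology
    exact hb.comp (continuous_apply j)
  · rw [Real.norm_eq_abs, abs_of_nonneg (term_nonneg c12 c12 d j)]
    exact term_le c12 c12 d j

lemma CS_compact : IsCompact CS := isCompact_range continuous_enc

lemma CS_closed : IsClosed CS := CS_compact.isClosed

lemma CS_sub : CS ⊆ Icc (1/3 : ℝ) (2/3) := by
  rintro x ⟨d, rfl⟩
  exact enc_mem d

lemma CS_mem_13 : (1/3:ℝ) ∈ CS := by
  refine ⟨fun _ => false, ?_⟩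
  simp [enc, dsum]

lemma CS_mem_23 : (2/3:ℝ) ∈ CS := by
  refine ⟨fun _ => true, ?_⟩
  rw [enc, dsum_all_true c29 r13 r13']
  norm_num

/-! ### Gaps of the Cantor set -/

def gapL (t : ℝ) : ℝ := sSup (CS ∩ Iic t)
def gapR (t : ℝ) : ℝ := sInf (CS ∩ Ici t)

lemma gapL_mem {t : ℝ} (ht : t ∈ Icc (1/3:ℝ) (2/3)) : gapL t ∈ CS ∩ Iic t := by
  refine (CS_closed.inter isClosed_Iic).csSup_mem ⟨1/3, CS_mem_13, ht.1⟩ ?_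
  exact BddAbove.mono inter_subset_right (bddAbove_Iic)

lemma gapR_mem {t : ℝ} (ht : t ∈ Icc (1/3:ℝ) (2/3)) : gapR t ∈ CS ∩ Ici t := by
  refine (CS_closed.inter isClosed_Ici).csInf_mem ⟨2/3, CS_mem_23, ht.2⟩ ?_
  exact BddBelow.mono inter_subset_right (bddBelow_Ici)

lemma le_gapL {t c : ℝ} (ht : t ∈ Icc (1/3:ℝ) (2/3)) (hc : c ∈ CS) (hct : c ≤ t) :
    c ≤ gapL t :=
  le_csSup (BddAbove.mono inter_subset_right (bddAbove_Iic)) ⟨hc, hct⟩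

lemma gapR_le {t c : ℝ} (ht : t ∈ Icc (1/3:ℝ) (2/3)) (hc : c ∈ CS) (hct : t ≤ c) :
    gapR t ≤ c :=
  csInf_le (BddBelow.mono inter_subset_right (bddBelow_Ici)) ⟨hc, hct⟩

lemma gap_empty {t : ℝ} (ht : t ∈ Icc (1/3:ℝ) (2/3)) (htC : t ∉ CS) :
    ∀ c ∈ CS, c ∉ Ioo (gapL t) (gapR t) := by
  intro c hc hcIoo
  rcases le_total c t with h | h
  · exact absurd (le_gapL ht hc h) (not_le.mpr hcIoo.1)
  · exact absurd (gapR_le ht hc h) (not_le.mpr hcIoo.2)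

lemma gapL_lt {t : ℝ} (ht : t ∈ Icc (1/3:ℝ) (2/3)) (htC : t ∉ CS) : gapL t < t :=
  lt_of_le_of_ne (gapL_mem ht).2 (fun h => htC (h ▸ (gapL_mem ht).1))

lemma lt_gapR {t : ℝ} (ht : t ∈ Icc (1/3:ℝ) (2/3)) (htC : t ∉ CS) : t < gapR t :=
  lt_of_le_of_ne (gapR_mem ht).2 (fun h => htC (h.symm ▸ (gapR_mem ht).1))

lemma gap_sub_Ioo {t : ℝ} (ht : t ∈ Icc (1/3:ℝ) (2/3)) :
    Ioo (gapL t) (gapR t) ⊆ Ioo (1/3:ℝ) (2/3) := by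
  intro s hs
  have h1 := CS_sub (gapL_mem ht).1
  have h2 := CS_sub (gapR_mem ht).1
  exact ⟨lt_of_le_of_lt h1.1 hs.1, lt_of_lt_of_le hs.2 h2.2⟩

lemma gap_const {t : ℝ} (ht : t ∈ Icc (1/3:ℝ) (2/3)) (htC : t ∉ CS) {s : ℝ}
    (hs : s ∈ Ioo (gapL t) (gapR t)) : gapL s = gapL t ∧ gapR s = gapR t := by
  have hsIcc : s ∈ Icc (1/3:ℝ) (2/3) :=
    ⟨le_of_lt (gap_sub_Ioo ht hs).1, le_of_lt (gap_sub_Ioo ht hs).2⟩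
  constructor
  · have h1 : CS ∩ Iic s = CS ∩ Iic (gapL t) := by
      ext c
      constructor
      · rintro ⟨hc, hcs⟩
        refine ⟨hc, ?_⟩
        by_contra h
        simp only [mem_Iic, not_le] at h
        exact gap_empty ht htC c hc ⟨h, lt_of_le_of_lt (mem_Iic.mp hcs) hs.2⟩
      · rintro ⟨hc, hcl⟩
        exact ⟨hc, hcl.trans hs.1.le⟩
    rw [gapL, h1]
    exact IsGreatest.csSup_eq ⟨⟨(gapL_mem ht).1, mem_Iic.mpr (le_refl _)⟩,
      fun c hc => mem_Iic.mp hc.2⟩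
  · have h1 : CS ∩ Ici s = CS ∩ Ici (gapR t) := by
      ext c
      constructor
      · rintro ⟨hc, hcs⟩
        refine ⟨hc, ?_⟩
        by_contra h
        simp only [mem_Ici, not_le] at h
        exact gap_empty ht htC c hc ⟨lt_of_lt_of_le hs.1 (mem_Ici.mp hcs), h⟩
      · rintro ⟨hc, hcl⟩
        exact ⟨hc, hs.2.le.trans hcl⟩
    rw [gapR, h1]
    exact IsLeast.csInf_eq ⟨⟨(gapR_mem ht).1, mem_Ici.mpr (le_refl _)⟩,
      fun c hc => mem_Ici.mp hc.2⟩

lemma gap_not_CS {t : ℝ} (ht : t ∈ Icc (1/3:ℝ) (2/3)) (htC : t ∉ CS) {s : ℝ}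
    (hs : s ∈ Ioo (gapL t) (gapR t)) : s ∉ CS :=
  fun hsC => gap_empty ht htC s hsC hs

/-! ### The parameter functions -/

def evens (d : ℕ → Bool) : ℕ → Bool := fun j => d (2 * j)
def odds (d : ℕ → Bool) : ℕ → Bool := fun j => d (2 * j + 1)

def encEquiv : (ℕ → Bool) ≃ CS := Equiv.ofInjective enc enc_inj

lemma continuous_encEquiv : Continuous (encEquiv : (ℕ → Bool) → CS) :=
  Continuous.subtype_mk continuous_enc _

def encHomeo : (ℕ → Bool) ≃ₜ CS := Continuous.homeoOfEquivCompactToT2 continuous_encEquiv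

lemma encHomeo_symm_enc (d : ℕ → Bool) :
    encHomeo.symm ⟨enc d, ⟨d, rfl⟩⟩ = d := by
  have : encHomeo d = ⟨enc d, ⟨d, rfl⟩⟩ := rfl
  rw [← this, Homeomorph.symm_apply_apply]

lemma exists_clamped (w : CS → ℝ) (hw : Continuous w) :
    ∃ W : ℝ → ℝ, Continuous W ∧ (∀ t, W t ∈ Icc (0:ℝ) 1) ∧
      ∀ x : CS, w x ∈ Icc (0:ℝ) 1 → W x = w x := by
  obtain ⟨g, hg⟩ := ContinuousMap.exists_restrict_eq (Y := ℝ) CS_closed ⟨w, hw⟩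
  refine ⟨fun t => max 0 (min 1 (g t)), ?_, fun t => ⟨le_max_left _ _, ?_⟩, ?_⟩
  · exact continuous_const.max (continuous_const.min g.continuous)
  · exact max_le zero_le_one (min_le_left _ _)
  · intro x hx
    have hgx : g x = w x := by
      have := congrArg (fun F : C(CS, ℝ) => F x) hg
      simpa using this
    show max 0 (min 1 (g x)) = w x
    rw [hgx, min_eq_right hx.2, max_eq_right hx.1]

lemma exists_UV : ∃ U V : ℝ → ℝ, Continuous U ∧ Continuous V ∧
    (∀ t, U t ∈ Icc (0:ℝ) 1) ∧ (∀ t, V t ∈ Icc (0:ℝ) 1) ∧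
    (∀ d : ℕ → Bool, U (enc d) = theta (evens d)) ∧
    (∀ d : ℕ → Bool, V (enc d) = theta (odds d)) := by
  have hsymm : Continuous fun x : CS => encHomeo.symm x := encHomeo.symm.continuous
  have hev : Continuous (evens) := continuous_pi fun j => continuous_apply (2 * j)
  have hod : Continuous (odds) := continuous_pi fun j => continuous_apply (2 * j + 1)
  have hce : Continuous fun x : CS => theta (evens (encHomeo.symm x)) :=
    continuous_theta.comp (hev.comp hsymm)
  have hco : Continuous fun x : CS => theta (odds (encHomeo.symm x)) :=
    continuous_theta.comp (hod.comp hsymm)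
  obtain ⟨U, hU, hUm, hUx⟩ := exists_clamped _ hce
  obtain ⟨V, hV, hVm, hVx⟩ := exists_clamped _ hco
  refine ⟨U, V, hU, hV, hUm, hVm, fun d => ?_, fun d => ?_⟩
  · have := hUx ⟨enc d, ⟨d, rfl⟩⟩ (by rw [encHomeo_symm_enc]; exact theta_mem _)
    rw [this, encHomeo_symm_enc]
  · have := hVx ⟨enc d, ⟨d, rfl⟩⟩ (by rw [encHomeo_symm_enc]; exact theta_mem _)
    rw [this, encHomeo_symm_enc]

/-! ### The oscillating function -/

def phiForm (A B r s : ℝ) : ℝ :=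
  r * (B - A) / (2 * Real.pi) * (1 - Real.cos (2 * Real.pi * (s - A) / (B - A)))

lemma phiForm_hasDerivAt {A B r : ℝ} (hAB : A < B) (s : ℝ) :
    HasDerivAt (phiForm A B r) (r * Real.sin (2 * Real.pi * (s - A) / (B - A))) s := by
  have hB : B - A ≠ 0 := ne_of_gt (by linarith)
  have hπ : Real.pi ≠ 0 := Real.pi_ne_zero
  have h1 : HasDerivAt (fun s : ℝ => 2 * Real.pi * (s - A) / (B - A))
      (2 * Real.pi / (B - A)) s := by
    have h2 := (((hasDerivAt_id s).sub_const A).const_mul (2 * Real.pi)).div_const (B - A)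
    simpa using h2
  have h3 := h1.cos
  have h4 := ((hasDerivAt_const s (1:ℝ)).sub h3).const_mul (r * (B - A) / (2 * Real.pi))
  refine HasDerivAt.congr_deriv (f := phiForm A B r) h4 ?_
  field_simp
  ring

lemma phiForm_left (A B r : ℝ) : phiForm A B r A = 0 := by
  simp [phiForm]

lemma phiForm_right {A B : ℝ} (r : ℝ) (hAB : A < B) : phiForm A B r B = 0 := by
  have hB : B - A ≠ 0 := ne_of_gt (by linarith)
  rw [phiForm]
  rw [show 2 * Real.pi * (B - A) / (B - A) = 2 * Real.pi by field_simp]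
  simp [Real.cos_two_pi]

lemma phiForm_lip {A B r : ℝ} (hr : 0 ≤ r) (hAB : A < B) {u t : ℝ} (hut : u ≤ t) :
    |phiForm A B r t - phiForm A B r u| ≤ r * (t - u) := by
  have hlin : ∀ s : ℝ, HasDerivAt (fun x : ℝ => r * x) r s := by
    intro s
    simpa using (hasDerivAt_id s).const_mul r
  have m1 : Monotone (fun s => r * s - phiForm A B r s) := by
    apply monotone_of_deriv_nonneg
    · intro s
      exact ((hlin s).sub (phiForm_hasDerivAt hAB s)).differentiableAt
    · intro s
      rw [HasDerivAt.deriv (f := fun s => r * s - phiForm A B r s) ((hlin s).sub (phiForm_hasDerivAt hAB s))]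
      have h := Real.sin_le_one (2 * Real.pi * (s - A) / (B - A))
      nlinarith
  have m2 : Monotone (fun s => r * s + phiForm A B r s) := by
    apply monotone_of_deriv_nonneg
    · intro s
      exact ((hlin s).add (phiForm_hasDerivAt hAB s)).differentiableAt
    · intro s
      rw [HasDerivAt.deriv (f := fun s => r * s + phiForm A B r s) ((hlin s).add (phiForm_hasDerivAt hAB s))]
      have h := Real.neg_one_le_sin (2 * Real.pi * (s - A) / (B - A))
      nlinarith
  have hm1 := m1 hut
  have hm2 := m2 hut
  simp only at hm1 hm2
  rw [abs_le]
  constructor <;> nlinarith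

/-! ### The function Φ -/

def rhat (ρ : ℝ → ℝ) (t : ℝ) : ℝ := sInf (ρ '' Icc (gapL t) (gapR t))

open Classical in
def Phi (ρ : ℝ → ℝ) (t : ℝ) : ℝ :=
  if t ∈ Ioo (1/3:ℝ) (2/3) ∧ t ∉ CS then
    phiForm (gapL t) (gapR t) (rhat ρ t) t
  else 0

def intg (ρ : ℝ → ℝ) (t : ℝ) : ℝ := ∫ s in (0:ℝ)..t, ρ s

section Analysis

variable {ρ : ℝ → ℝ} (hρc : Continuous ρ) (hρ0 : ∀ s, 0 ≤ ρ s)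

lemma intg_sub (hρc : Continuous ρ) (u t : ℝ) :
    intg ρ t - intg ρ u = ∫ s in u..t, ρ s := by
  rw [intg, intg]
  exact intervalIntegral.integral_interval_sub_left
    (hρc.intervalIntegrable 0 t) (hρc.intervalIntegrable 0 u)

lemma intg_mono (hρc : Continuous ρ) (hρ0 : ∀ s, 0 ≤ ρ s) {u t : ℝ} (hut : u ≤ t) :
    intg ρ u ≤ intg ρ t := by
  have h : (0:ℝ) ≤ ∫ s in u..t, ρ s :=
    intervalIntegral.integral_nonneg hut (fun s _ => hρ0 s)
  have := intg_sub hρc u t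
  linarith

lemma rhat_bddBelow (hρ0 : ∀ s, 0 ≤ ρ s) (t : ℝ) :
    BddBelow (ρ '' Icc (gapL t) (gapR t)) := by
  refine ⟨0, ?_⟩
  rintro y ⟨s, _, rfl⟩
  exact hρ0 s

lemma gapL_le_gapR {t : ℝ} (ht : t ∈ Icc (1/3:ℝ) (2/3)) : gapL t ≤ gapR t :=
  (gapL_mem ht).2.trans (gapR_mem ht).2

lemma rhat_nonneg (hρ0 : ∀ s, 0 ≤ ρ s) {t : ℝ} (ht : t ∈ Icc (1/3:ℝ) (2/3)) :
    0 ≤ rhat ρ t := by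
  refine le_csInf ⟨ρ (gapL t), mem_image_of_mem _ ⟨le_refl _, gapL_le_gapR ht⟩⟩ ?_
  rintro y ⟨s, _, rfl⟩
  exact hρ0 s

lemma rhat_le (hρ0 : ∀ s, 0 ≤ ρ s) {t s : ℝ}
    (hs : s ∈ Icc (gapL t) (gapR t)) : rhat ρ t ≤ ρ s :=
  csInf_le (rhat_bddBelow hρ0 t) (mem_image_of_mem _ hs)

lemma Phi_eq_on_gap {g : ℝ} (hg : g ∈ Ioo (1/3:ℝ) (2/3)) (hgC : g ∉ CS) {s : ℝ}
    (hs : s ∈ Icc (gapL g) (gapR g)) :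
    Phi ρ s = phiForm (gapL g) (gapR g) (rhat ρ g) s := by
  have hgIcc : g ∈ Icc (1/3:ℝ) (2/3) := ⟨hg.1.le, hg.2.le⟩
  have hLR : gapL g < gapR g := (gapL_lt hgIcc hgC).trans (lt_gapR hgIcc hgC)
  rcases eq_or_lt_of_le hs.1 with h1 | h1
  · rw [Phi, if_neg, ← h1, phiForm_left]
    rintro ⟨_, hnc⟩
    exact hnc (h1 ▸ (gapL_mem hgIcc).1)
  rcases eq_or_lt_of_le hs.2 with h2 | h2
  · rw [Phi, if_neg, h2, phiForm_right _ hLR]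
    rintro ⟨_, hnc⟩
    exact hnc (h2.symm ▸ (gapR_mem hgIcc).1)
  have hsIoo : s ∈ Ioo (gapL g) (gapR g) := ⟨h1, h2⟩
  have hsC : s ∉ CS := gap_not_CS hgIcc hgC hsIoo
  have hconst := gap_const hgIcc hgC hsIoo
  rw [Phi, if_pos ⟨gap_sub_Ioo hgIcc hsIoo, hsC⟩, rhat, hconst.1, hconst.2]
  rfl

lemma Phi_zero_of_not {t : ℝ} (h : ¬(t ∈ Ioo (1/3:ℝ) (2/3) ∧ t ∉ CS)) : Phi ρ t = 0 :=
  if_neg h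

lemma Phi_gapbound (hρc : Continuous ρ) (hρ0 : ∀ s, 0 ≤ ρ s) {g : ℝ}
    (hg : g ∈ Ioo (1/3:ℝ) (2/3)) (hgC : g ∉ CS) {u t : ℝ}
    (hu : u ∈ Icc (gapL g) (gapR g)) (ht : t ∈ Icc (gapL g) (gapR g)) (hut : u ≤ t) :
    |Phi ρ t - Phi ρ u| ≤ intg ρ t - intg ρ u := by
  have hgIcc : g ∈ Icc (1/3:ℝ) (2/3) := ⟨hg.1.le, hg.2.le⟩
  have hLR : gapL g < gapR g := (gapL_lt hgIcc hgC).trans (lt_gapR hgIcc hgC)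
  rw [Phi_eq_on_gap hg hgC ht, Phi_eq_on_gap hg hgC hu]
  refine (phiForm_lip (rhat_nonneg hρ0 hgIcc) hLR hut).trans ?_
  rw [intg_sub hρc]
  have h1 : (∫ _ in u..t, rhat ρ g) = rhat ρ g * (t - u) := by
    rw [intervalIntegral.integral_const, smul_eq_mul]
    ring
  rw [← h1]
  refine intervalIntegral.integral_mono_on hut (intervalIntegrable_const)
    (hρc.intervalIntegrable u t) ?_
  intro s hsu
  exact rhat_le hρ0 ⟨hu.1.trans hsu.1, hsu.2.trans ht.2⟩

lemma Phi_global (hρc : Continuous ρ) (hρ0 : ∀ s, 0 ≤ ρ s) :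
    ∀ u t : ℝ, u ≤ t → |Phi ρ t - Phi ρ u| ≤ intg ρ t - intg ρ u := by
  have key0 : ∀ u t : ℝ, u ≤ t → ¬(t ∈ Ioo (1/3:ℝ) (2/3) ∧ t ∉ CS) →
      |Phi ρ t - Phi ρ u| ≤ intg ρ t - intg ρ u := by
    intro u t hut hnt
    rw [Phi_zero_of_not hnt]
    by_cases hug : u ∈ Ioo (1/3:ℝ) (2/3) ∧ u ∉ CS
    · have huIcc : u ∈ Icc (1/3:ℝ) (2/3) := ⟨hug.1.1.le, hug.1.2.le⟩
      have hR : gapR u ≤ t := by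
        by_contra h
        push_neg at h
        have htIoo : t ∈ Ioo (gapL u) (gapR u) :=
          ⟨lt_of_lt_of_le (gapL_lt huIcc hug.2) hut, h⟩
        exact hnt ⟨gap_sub_Ioo huIcc htIoo, gap_not_CS huIcc hug.2 htIoo⟩
      have hu' : u ∈ Icc (gapL u) (gapR u) := ⟨(gapL_mem huIcc).2, (gapR_mem huIcc).2⟩
      have hR' : gapR u ∈ Icc (gapL u) (gapR u) := ⟨gapL_le_gapR huIcc, le_refl _⟩
      have h1 := Phi_gapbound hρc hρ0 hug.1 hug.2 hu' hR' (gapR_mem huIcc).2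
      have h2 : Phi ρ (gapR u) = 0 := by
        refine Phi_zero_of_not ?_
        rintro ⟨_, hnc⟩
        exact hnc (gapR_mem huIcc).1
      rw [h2] at h1
      have h3 := intg_mono hρc hρ0 hR
      calc |0 - Phi ρ u| ≤ intg ρ (gapR u) - intg ρ u := h1
        _ ≤ intg ρ t - intg ρ u := by linarith
    · rw [Phi_zero_of_not hug]
      simp only [sub_self, abs_zero]
      have := intg_mono hρc hρ0 hut
      linarith
  intro u t hut
  by_cases htg : t ∈ Ioo (1/3:ℝ) (2/3) ∧ t ∉ CS
  · have htIcc : t ∈ Icc (1/3:ℝ) (2/3) := ⟨htg.1.1.le, htg.1.2.le⟩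
    by_cases hu : gapL t ≤ u
    · exact Phi_gapbound hρc hρ0 htg.1 htg.2 ⟨hu, hut.trans (gapR_mem htIcc).2⟩
        ⟨(gapL_mem htIcc).2, (gapR_mem htIcc).2⟩ hut
    · push_neg at hu
      have h1 := Phi_gapbound hρc hρ0 htg.1 htg.2
        ⟨le_refl _, gapL_le_gapR htIcc⟩ ⟨(gapL_mem htIcc).2, (gapR_mem htIcc).2⟩
        (gapL_mem htIcc).2
      have h2 := key0 u (gapL t) hu.le (by rintro ⟨_, hnc⟩; exact hnc (gapL_mem htIcc).1)
      calc |Phi ρ t - Phi ρ u|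
          ≤ |Phi ρ t - Phi ρ (gapL t)| + |Phi ρ (gapL t) - Phi ρ u| := abs_sub_le _ _ _
        _ ≤ intg ρ t - intg ρ u := by linarith
  · exact key0 u t hut htg

end Analysis

/-! ### The function f -/

def fdef (m ρ : ℝ → ℝ) (t : ℝ) : ℝ := intg m t + Phi ρ t

section FProps

variable {m ρ : ℝ → ℝ}

lemma fdef_lip_le (hm : Continuous m) (hρc : Continuous ρ)
    (hρ0 : ∀ s, 0 ≤ ρ s) (hb : ∀ s, |m s| + ρ s ≤ 1) :
    ∀ u t : ℝ, u ≤ t → |fdef m ρ t - fdef m ρ u| ≤ t - u := by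
  intro u t hut
  have h1 := Phi_global hρc hρ0 u t hut
  have h2 : |intg m t - intg m u| ≤ ∫ s in u..t, |m s| := by
    rw [intg_sub hm]
    exact intervalIntegral.abs_integral_le_integral_abs hut
  have h3 : (∫ s in u..t, |m s|) + (intg ρ t - intg ρ u) ≤ t - u := by
    rw [intg_sub hρc]
    have h4 : (∫ s in u..t, |m s|) + (∫ s in u..t, ρ s) = ∫ s in u..t, (|m s| + ρ s) :=
      (intervalIntegral.integral_add (hm.abs.intervalIntegrable u t)
        (hρc.intervalIntegrable u t)).symm
    rw [h4]
    have h5 : (∫ s in u..t, (|m s| + ρ s)) ≤ ∫ _ in u..t, (1:ℝ) := by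
      refine intervalIntegral.integral_mono_on hut
        ((hm.abs.add hρc).intervalIntegrable u t) (intervalIntegrable_const) ?_
      intro s _
      exact hb s
    rw [intervalIntegral.integral_const, smul_eq_mul, mul_one] at h5
    exact h5
  have h6 : fdef m ρ t - fdef m ρ u = (intg m t - intg m u) + (Phi ρ t - Phi ρ u) := by
    rw [fdef, fdef]; ring
  rw [h6]
  calc |(intg m t - intg m u) + (Phi ρ t - Phi ρ u)|
      ≤ |intg m t - intg m u| + |Phi ρ t - Phi ρ u| := abs_add_le _ _
    _ ≤ t - u := by linarith

lemma fdef_lip (hm : Continuous m) (hρc : Continuous ρ)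
    (hρ0 : ∀ s, 0 ≤ ρ s) (hb : ∀ s, |m s| + ρ s ≤ 1) : LipschitzWith 1 (fdef m ρ) := by
  refine LipschitzWith.of_dist_le_mul ?_
  intro x y
  rw [Real.dist_eq, Real.dist_eq, NNReal.coe_one, one_mul]
  rcases le_total x y with h | h
  · rw [abs_sub_comm (fdef m ρ x), abs_sub_comm x y,
      abs_of_nonneg (by linarith : (0:ℝ) ≤ y - x)]
    exact fdef_lip_le hm hρc hρ0 hb x y h
  · rw [abs_of_nonneg (by linarith : (0:ℝ) ≤ x - y)]
    exact fdef_lip_le hm hρc hρ0 hb y x h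

lemma intg_hasDerivAt (hρc : Continuous ρ) (t : ℝ) : HasDerivAt (intg ρ) (ρ t) t :=
  (hρc.integral_hasStrictDerivAt 0 t).hasDerivAt

lemma deriv_nonneg_of_monotone {g : ℝ → ℝ} (hg : Monotone g) {u d : ℝ}
    (hd : HasDerivAt g d u) : 0 ≤ d := by
  have h := hasDerivAt_iff_tendsto_slope.mp hd
  have h2 : Tendsto (slope g u) (𝓝[>] u) (𝓝 d) :=
    h.mono_left (nhdsWithin_mono u (fun x hx => ne_of_gt hx))
  refine ge_of_tendsto h2 ?_
  filter_upwards [self_mem_nhdsWithin] with x hx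
  rw [slope_def_field]
  have hux : u < x := hx
  exact div_nonneg (sub_nonneg.mpr (hg hux.le)) (sub_nonneg.mpr hux.le)

lemma fdef_sandwich_upper (hm : Continuous m) (hρc : Continuous ρ) (hρ0 : ∀ s, 0 ≤ ρ s) :
    Monotone (fun t => intg (fun s => m s + ρ s) t - fdef m ρ t) := by
  intro u t hut
  have h1 := Phi_global hρc hρ0 u t hut
  have h2 : ∀ w : ℝ, intg (fun s => m s + ρ s) w = intg m w + intg ρ w := by
    intro w
    rw [intg, intg, intg]
    exact intervalIntegral.integral_add (hm.intervalIntegrable 0 w)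
      (hρc.intervalIntegrable 0 w)
  simp only [h2, fdef]
  have := (abs_le.mp h1).2
  linarith

lemma fdef_sandwich_lower (hm : Continuous m) (hρc : Continuous ρ) (hρ0 : ∀ s, 0 ≤ ρ s) :
    Monotone (fun t => fdef m ρ t - intg (fun s => m s - ρ s) t) := by
  intro u t hut
  have h1 := Phi_global hρc hρ0 u t hut
  have h2 : ∀ w : ℝ, intg (fun s => m s - ρ s) w = intg m w - intg ρ w := by
    intro w
    rw [intg, intg, intg]
    exact intervalIntegral.integral_sub (hm.intervalIntegrable 0 w)
      (hρc.intervalIntegrable 0 w)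
  simp only [h2, fdef]
  have := (abs_le.mp h1).1
  linarith

lemma fdef_deriv_le (hm : Continuous m) (hρc : Continuous ρ) (hρ0 : ∀ s, 0 ≤ ρ s)
    {u : ℝ} (hd : DifferentiableAt ℝ (fdef m ρ) u) :
    deriv (fdef m ρ) u ≤ m u + ρ u := by
  have h1 : HasDerivAt (fun t => intg (fun s => m s + ρ s) t - fdef m ρ t)
      ((m u + ρ u) - deriv (fdef m ρ) u) u :=
    (intg_hasDerivAt (hm.add hρc) u).sub hd.hasDerivAt
  have := deriv_nonneg_of_monotone (fdef_sandwich_upper hm hρc hρ0) h1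
  linarith

lemma fdef_deriv_ge (hm : Continuous m) (hρc : Continuous ρ) (hρ0 : ∀ s, 0 ≤ ρ s)
    {u : ℝ} (hd : DifferentiableAt ℝ (fdef m ρ) u) :
    m u - ρ u ≤ deriv (fdef m ρ) u := by
  have h1 : HasDerivAt (fun t => fdef m ρ t - intg (fun s => m s - ρ s) t)
      (deriv (fdef m ρ) u - (m u - ρ u)) u :=
    hd.hasDerivAt.sub (intg_hasDerivAt (hm.sub hρc) u)
  have := deriv_nonneg_of_monotone (fdef_sandwich_lower hm hρc hρ0) h1
  linarith

lemma fdef_gap_hasDerivAt (hm : Continuous m)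
    {g : ℝ} (hg : g ∈ Ioo (1/3:ℝ) (2/3)) (hgC : g ∉ CS) {s : ℝ}
    (hs : s ∈ Ioo (gapL g) (gapR g)) :
    HasDerivAt (fdef m ρ)
      (m s + rhat ρ g * Real.sin (2 * Real.pi * (s - gapL g) / (gapR g - gapL g))) s := by
  have hgIcc : g ∈ Icc (1/3:ℝ) (2/3) := ⟨hg.1.le, hg.2.le⟩
  have hLR : gapL g < gapR g := (gapL_lt hgIcc hgC).trans (lt_gapR hgIcc hgC)
  have hPhiEq : Phi ρ =ᶠ[nhds s] phiForm (gapL g) (gapR g) (rhat ρ g) := by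
    filter_upwards [Ioo_mem_nhds hs.1 hs.2] with y hy
    exact Phi_eq_on_gap hg hgC ⟨hy.1.le, hy.2.le⟩
  have h2 : HasDerivAt (Phi ρ)
      (rhat ρ g * Real.sin (2 * Real.pi * (s - gapL g) / (gapR g - gapL g))) s :=
    (phiForm_hasDerivAt hLR s).congr_of_eventuallyEq hPhiEq
  exact (intg_hasDerivAt hm s).add h2

end FProps

/-! ### Binary digits: surjectivity of theta -/

lemma theta_all_true : theta (fun _ => true) = 1 := by
  rw [theta, dsum_all_true c12 c12 r12']
  norm_num

def bdig (u : ℝ) (j : ℕ) : Bool := decide (⌊u * 2 ^ (j+1)⌋ - 2 * ⌊u * 2 ^ j⌋ = 1)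

lemma bdig_step (u : ℝ) (j : ℕ) :
    ⌊u * 2 ^ (j+1)⌋ - 2 * ⌊u * 2 ^ j⌋ = 0 ∨ ⌊u * 2 ^ (j+1)⌋ - 2 * ⌊u * 2 ^ j⌋ = 1 := by
  have h1 : (⌊u * 2 ^ j⌋ : ℝ) ≤ u * 2 ^ j := Int.floor_le _
  have h2 : u * 2 ^ j < ⌊u * 2 ^ j⌋ + 1 := Int.lt_floor_add_one _
  have e : u * 2 ^ (j+1) = 2 * (u * 2 ^ j) := by ring
  have l1 : (2 * ⌊u * 2 ^ j⌋ : ℤ) ≤ ⌊u * 2 ^ (j+1)⌋ := by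
    apply Int.le_floor.mpr
    push_cast
    rw [e]
    linarith
  have l2 : ⌊u * 2 ^ (j+1)⌋ < 2 * ⌊u * 2 ^ j⌋ + 2 := by
    apply Int.floor_lt.mpr
    push_cast
    rw [e]
    linarith
  omega

lemma bdig_partial {u : ℝ} (hu0 : 0 ≤ u) (hu1 : u < 1) (n : ℕ) :
    ∑ j ∈ Finset.range n, (if bdig u j then (1/2:ℝ) * (1/2)^j else 0)
      = (⌊u * 2 ^ n⌋ : ℝ) / 2 ^ n := by
  induction n with
  | zero =>
    have h0 : ⌊u⌋ = 0 := Int.floor_eq_zero_iff.mpr ⟨hu0, hu1⟩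
    simp [h0]
  | succ n ih =>
    rw [Finset.sum_range_succ, ih]
    have hterm : (if bdig u n then (1/2:ℝ)*(1/2)^n else 0)
        = ((⌊u * 2^(n+1)⌋ - 2*⌊u * 2^n⌋ : ℤ) : ℝ) * (1/2)^(n+1) := by
      rcases bdig_step u n with h | h
      · rw [bdig]
        simp [h]
      · rw [bdig]
        simp only [h]
        norm_num [pow_succ]
        ring
    rw [hterm]
    have h2 : ((2:ℝ))^(n+1) ≠ 0 := by positivity
    have h3 : ((2:ℝ))^n ≠ 0 := by positivity
    push_cast
    rw [show ((1:ℝ)/2)^(n+1) = 1/2^(n+1) by rw [div_pow]; norm_num]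
    field_simp
    ring

lemma theta_bdig {u : ℝ} (hu0 : 0 ≤ u) (hu1 : u < 1) : theta (bdig u) = u := by
  have hs := (summable_term c12 c12 r12' (bdig u)).hasSum
  have ht : Tendsto (fun n => ∑ j ∈ Finset.range n,
      (if bdig u j then (1/2:ℝ)*(1/2)^j else 0)) atTop (nhds (theta (bdig u))) :=
    hs.tendsto_sum_nat
  have hbound : ∀ n : ℕ, ‖(⌊u * 2 ^ n⌋ : ℝ) / 2 ^ n - u‖ ≤ (1/2:ℝ)^n := by
    intro n
    have h1 : (⌊u * 2 ^ n⌋ : ℝ) ≤ u * 2 ^ n := Int.floor_le _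
    have h2 : u * 2 ^ n < ⌊u * 2 ^ n⌋ + 1 := Int.lt_floor_add_one _
    have hp : (0:ℝ) < 2 ^ n := by positivity
    rw [Real.norm_eq_abs, abs_le]
    constructor
    · rw [div_sub' (ne_of_gt hp)]
      rw [le_div_iff₀ hp]
      have : ((1:ℝ)/2)^n * 2^n = 1 := by
        rw [div_pow]
        field_simp
        exact one_pow n
      nlinarith
    · rw [div_sub' (ne_of_gt hp), div_le_iff₀ hp]
      have hpw : (0:ℝ) < (1/2)^n := by positivity
      nlinarith
  have ht2 : Tendsto (fun n : ℕ => (⌊u * 2 ^ n⌋ : ℝ) / 2 ^ n) atTop (nhds u) := by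
    have hz : Tendsto (fun n : ℕ => (⌊u * 2 ^ n⌋ : ℝ) / 2 ^ n - u) atTop (nhds 0) :=
      squeeze_zero_norm hbound
        (tendsto_pow_atTop_nhds_zero_of_lt_one (by norm_num) (by norm_num))
    have := hz.add_const u
    simpa using this
  have ht3 : Tendsto (fun n => ∑ j ∈ Finset.range n,
      (if bdig u j then (1/2:ℝ)*(1/2)^j else 0)) atTop (nhds u) := by
    have : (fun n => ∑ j ∈ Finset.range n, (if bdig u j then (1/2:ℝ)*(1/2)^j else 0))
        = fun n : ℕ => (⌊u * 2 ^ n⌋ : ℝ) / 2 ^ n := funext fun n => bdig_partial hu0 hu1 n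
    rw [this]
    exact ht2
  exact tendsto_nhds_unique ht ht3

lemma theta_surj {u : ℝ} (hu : u ∈ Icc (0:ℝ) 1) : ∃ d, theta d = u := by
  rcases eq_or_lt_of_le hu.2 with h | h
  · exact ⟨fun _ => true, by rw [theta_all_true, h]⟩
  · exact ⟨bdig u, theta_bdig hu.1 h⟩

/-! ### Interleaving -/

def interleave (p q : ℕ → Bool) : ℕ → Bool :=
  fun i => if i % 2 = 0 then p (i / 2) else q (i / 2)

lemma evens_interleave (p q : ℕ → Bool) : evens (interleave p q) = p := by
  funext j
  have h1 : (2 * j) % 2 = 0 := by omega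
  have h2 : (2 * j) / 2 = j := by omega
  rw [evens, interleave, h1, h2]
  simp

lemma odds_interleave (p q : ℕ → Bool) : odds (interleave p q) = q := by
  funext j
  have h1 : (2 * j + 1) % 2 = 1 := by omega
  have h2 : (2 * j + 1) / 2 = j := by omega
  rw [odds, interleave, h1, h2]
  simp

/-! ### The gap points approaching a Cantor point -/

lemma enc_mono {d1 d2 : ℕ → Bool} (h : ∀ j, d1 j = true → d2 j = true) :
    enc d1 ≤ enc d2 := by
  have := dsum_mono (c := 2/9) (r := 1/3) c29 r13 r13' h
  rw [enc, enc]
  linarith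

lemma enc_single_diff {d1 d2 : ℕ → Bool} {n : ℕ} (h : ∀ j, j ≠ n → d1 j = d2 j)
    (h1 : d1 n = true) (h2 : d2 n = false) :
    enc d1 - enc d2 = 2 * (1/3:ℝ)^(n+2) := by
  have hs1 := summable_term (d := d1) c29 r13 r13'
  have hs2 := summable_term (d := d2) c29 r13 r13'
  have key : enc d1 - enc d2
      = ∑' j, ((if d1 j then (2/9:ℝ) * (1/3) ^ j else 0)
          - (if d2 j then (2/9:ℝ) * (1/3) ^ j else 0)) := by
    rw [enc, enc, dsum, dsum, Summable.tsum_sub hs1 hs2]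
    ring
  rw [key]
  rw [tsum_eq_single n ?_]
  · rw [h1, h2]
    simp only [if_true, Bool.false_eq_true, if_false, sub_zero]
    rw [pow_succ, pow_succ]
    ring
  · intro j hj
    rw [h j hj]
    ring

def gpt (d : ℕ → Bool) (n : ℕ) : ℝ := enc (pre d n) + (1/3:ℝ)^(n+1) / 2

lemma gpt_lt (d : ℕ → Bool) (n : ℕ) :
    enc (pre d n) < gpt d n ∧ gpt d n < enc (pre d n) + (1/3:ℝ)^(n+1) := by
  have hp : (0:ℝ) < (1/3)^(n+1) := by positivity
  constructor <;> (rw [gpt]; linarith)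

lemma gpt_mem_Ioo (d : ℕ → Bool) (n : ℕ) : gpt d n ∈ Ioo (1/3:ℝ) (2/3) := by
  have h1 := (enc_mem (pre d n)).1
  have h2 := enc_preT_sub_pre d n
  have h3 := (enc_mem (preT d n)).2
  have hp : (0:ℝ) < (1/3)^(n+1) := by positivity
  constructor
  · rw [gpt]; linarith
  · rw [gpt]; linarith

lemma gpt_not_CS (d : ℕ → Bool) (n : ℕ) : gpt d n ∉ CS := by
  rintro ⟨d', hd'⟩
  have hp : (0:ℝ) < (1/3)^(n+1) := by positivity
  have hps : (1/3:ℝ)^(n+2) = (1/3)^(n+1) * (1/3) := pow_succ _ _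
  by_cases hpre : ∀ j < n, d' j = d j
  · cases hdn : d' n
    · -- d' n = false : enc d' is too low
      have h1 : pre d' (n+1) = pre d n := by
        funext j
        rcases lt_trichotomy j n with hj | hj | hj
        · simp [pre, hj, Nat.lt_succ_of_lt hj, hpre j hj]
        · subst hj
          simp [pre, hdn]
        · have : ¬ j < n + 1 := by omega
          simp [pre, this, Nat.lt_asymm hj]
      have h2 := enc_sub_pre_le d' (n+1)
      rw [h1] at h2
      rw [hd', gpt] at h2
      linarith
    · -- d' n = true : enc d' is too high
      set q : ℕ → Bool := fun j => if j < n then d j else if j = n then true else false with hq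
      have hmono : enc q ≤ enc d' := by
        refine enc_mono ?_
        intro j hj
        rcases lt_trichotomy j n with h | h | h
        · rw [hpre j h]
          simpa [hq, h] using hj
        · subst h
          exact hdn
        · have hn : ¬ j < n := by omega
          have hne : j ≠ n := by omega
          simp [hq, hn, hne] at hj
      have hdiff : enc q - enc (pre d n) = 2 * (1/3:ℝ)^(n+2) := by
        refine enc_single_diff ?_ ?_ ?_
        · intro j hj
          rcases lt_or_ge j n with h | h
          · simp [hq, pre, h]
          · have hn : ¬ j < n := by omega
            simp [hq, pre, hn, hj]
        · simp [hq]
        · simp [pre]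
      rw [hd', gpt] at hmono
      linarith
  · push_neg at hpre
    obtain ⟨j, hjn, hne⟩ := hpre
    have hex : ∃ i, d' i ≠ d i := ⟨j, hne⟩
    have hi := Nat.find_spec hex
    have hile : Nat.find hex ≤ j := Nat.find_min' hex hne
    have hmin : ∀ k < Nat.find hex, d' k = d k := fun k hk => by
      have := Nat.find_min hex hk
      simpa using this
    have hsep := enc_sep hmin hi
    have hle : (1/3:ℝ)^(n+1) ≤ (1/3)^(Nat.find hex + 2) := by
      apply pow_le_pow_of_le_one (by norm_num) (by norm_num)
      omega
    have hx1 := enc_pre_le d n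
    have hx2 := enc_sub_pre_le d n
    have habs : |enc d' - enc d| ≤ (1/3:ℝ)^(n+1) / 2 := by
      rw [hd', gpt, abs_le]
      constructor <;> [linarith; linarith]
    have := hsep.trans habs
    linarith

lemma gpt_gap_bounds (d : ℕ → Bool) (n : ℕ) :
    enc (pre d n) ≤ gapL (gpt d n) ∧ gapR (gpt d n) ≤ enc (pre d n) + (1/3:ℝ)^(n+1) := by
  have hIcc : gpt d n ∈ Icc (1/3:ℝ) (2/3) :=
    ⟨(gpt_mem_Ioo d n).1.le, (gpt_mem_Ioo d n).2.le⟩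
  constructor
  · exact le_gapL hIcc ⟨pre d n, rfl⟩ (gpt_lt d n).1.le
  · have h2 := enc_preT_sub_pre d n
    have := gapR_le hIcc ⟨preT d n, rfl⟩ (by linarith [(gpt_lt d n).2])
    linarith

/-! ### Lipschitz bound on derivatives -/

lemma lip_deriv_le {f : ℝ → ℝ} {K : NNReal} (hf : LipschitzWith K f) {u : ℝ}
    (hd : DifferentiableAt ℝ f u) : |deriv f u| ≤ K := by
  have h := hasDerivAt_iff_tendsto_slope.mp hd.hasDerivAt
  have habs : Tendsto (fun x => |slope f u x|) (𝓝[≠] u) (nhds |deriv f u|) := h.abs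
  refine le_of_tendsto habs ?_
  filter_upwards [self_mem_nhdsWithin] with x hx
  have hxu : x ≠ u := hx
  rw [slope_def_field, abs_div]
  rw [div_le_iff₀ (abs_pos.mpr (sub_ne_zero.mpr hxu))]
  have h2 := hf.dist_le_mul x u
  rw [Real.dist_eq, Real.dist_eq] at h2
  exact h2

/-! ### Auxiliary limits -/

lemma tendsto_w : Tendsto (fun n : ℕ => (1/3:ℝ)^(n+1)) atTop (nhds 0) := by
  have h : Tendsto (fun n : ℕ => (1/3:ℝ)^n) atTop (nhds 0) :=
    tendsto_pow_atTop_nhds_zero_of_lt_one (by norm_num) (by norm_num)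
  have := h.comp (tendsto_add_atTop_nat 1)
  simpa [Function.comp_def] using this

end
end Stmt2

/-- There exists a function `f : ℝ → ℝ` with Lipschitz constant exactly `1`
such that for all `−1 ≤ a ≤ b ≤ 1` there is `x ∈ (0,1)` with `∂f(x) = [a,b]`. -/
theorem stmt_2 :
    ∃ f : ℝ → ℝ, LipschitzWith 1 f ∧ (∀ K : NNReal, LipschitzWith K f → 1 ≤ K) ∧
      ∀ a b : ℝ, -1 ≤ a → a ≤ b → b ≤ 1 →
        ∃ x ∈ Ioo (0:ℝ) 1, clarke f x = Icc a b := by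
  classical
  open Stmt2 in
  obtain ⟨U, V, hU, hV, hUm, hVm, hUe, hVe⟩ := Stmt2.exists_UV
  set ρ : ℝ → ℝ := fun t => V t * (1 - U t) with hρdef
  set m : ℝ → ℝ := fun t => 2 * U t - 1 + ρ t with hmdef
  have hρc : Continuous ρ := hV.mul (continuous_const.sub hU)
  have hmc : Continuous m := ((continuous_const.mul hU).sub continuous_const).add hρc
  have hρ0 : ∀ s, 0 ≤ ρ s := fun s => mul_nonneg (hVm s).1 (by linarith [(hUm s).2])
  have hρval : ∀ s, ρ s = V s * (1 - U s) := fun s => rfl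
  have hmval : ∀ s, m s = 2 * U s - 1 + ρ s := fun s => rfl
  have hb : ∀ s, |m s| + ρ s ≤ 1 := by
    intro s
    have h1 := (hUm s).1
    have h2 := (hUm s).2
    have h3 := (hVm s).1
    have h4 := (hVm s).2
    have hup : m s + ρ s ≤ 1 := by
      rw [hmval, hρval]
      nlinarith
    have hlo : ρ s - 1 ≤ m s := by
      rw [hmval]
      linarith
    have habs : |m s| ≤ 1 - ρ s := abs_le.mpr ⟨by linarith, by linarith⟩
    linarith
  set f : ℝ → ℝ := Stmt2.fdef m ρ with hfdef
  have hlip : LipschitzWith 1 f := Stmt2.fdef_lip hmc hρc hρ0 hb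
  -- the derivative sequences
  have hseq : ∀ (d : ℕ → Bool) (c : ℝ), 0 < c → c < 1 → ∃ useq : ℕ → ℝ,
      (∀ n, DifferentiableAt ℝ f (useq n)) ∧ Tendsto useq atTop (nhds (enc d)) ∧
      Tendsto (fun n => deriv f (useq n)) atTop
        (nhds (m (enc d) + ρ (enc d) * Real.sin (2 * Real.pi * c))) := by
    intro d c hc0 hc1
    set x := Stmt2.enc d with hxdef
    set useq : ℕ → ℝ := fun n =>
      Stmt2.gapL (Stmt2.gpt d n) + c * (Stmt2.gapR (Stmt2.gpt d n) - Stmt2.gapL (Stmt2.gpt d n))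
      with husdef
    have hgIoo : ∀ n, Stmt2.gpt d n ∈ Ioo (1/3:ℝ) (2/3) := Stmt2.gpt_mem_Ioo d
    have hgC : ∀ n, Stmt2.gpt d n ∉ Stmt2.CS := Stmt2.gpt_not_CS d
    have hgIcc : ∀ n, Stmt2.gpt d n ∈ Icc (1/3:ℝ) (2/3) :=
      fun n => ⟨(hgIoo n).1.le, (hgIoo n).2.le⟩
    have hL : ∀ n, Stmt2.gapL (Stmt2.gpt d n) < Stmt2.gapR (Stmt2.gpt d n) :=
      fun n => (Stmt2.gapL_lt (hgIcc n) (hgC n)).trans (Stmt2.lt_gapR (hgIcc n) (hgC n))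
    have hval : ∀ n, useq n = Stmt2.gapL (Stmt2.gpt d n)
        + c * (Stmt2.gapR (Stmt2.gpt d n) - Stmt2.gapL (Stmt2.gpt d n)) := fun n => rfl
    have hmem : ∀ n, useq n ∈ Ioo (Stmt2.gapL (Stmt2.gpt d n)) (Stmt2.gapR (Stmt2.gpt d n)) := by
      intro n
      have h := hL n
      constructor
      · rw [hval n]
        nlinarith
      · rw [hval n]
        nlinarith
    have hDA : ∀ n, HasDerivAt f
        (m (useq n) + Stmt2.rhat ρ (Stmt2.gpt d n) * Real.sin (2 * Real.pi * c)) (useq n) := by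
      intro n
      have h := Stmt2.fdef_gap_hasDerivAt (ρ := ρ) hmc (hgIoo n) (hgC n) (hmem n)
      have harg : 2 * Real.pi * (useq n - Stmt2.gapL (Stmt2.gpt d n))
          / (Stmt2.gapR (Stmt2.gpt d n) - Stmt2.gapL (Stmt2.gpt d n)) = 2 * Real.pi * c := by
        have hne : Stmt2.gapR (Stmt2.gpt d n) - Stmt2.gapL (Stmt2.gpt d n) ≠ 0 :=
          ne_of_gt (by linarith [hL n])
        rw [hval n]
        field_simp
        ring
      rw [harg] at h
      exact h
    -- bounds : both useq n and x lie in [P n, P n + w n]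
    have hxlo : ∀ n, Stmt2.enc (Stmt2.pre d n) ≤ x := fun n => Stmt2.enc_pre_le d n
    have hxhi : ∀ n, x ≤ Stmt2.enc (Stmt2.pre d n) + (1/3:ℝ)^(n+1) := by
      intro n
      have := Stmt2.enc_sub_pre_le d n
      linarith
    have huslo : ∀ n, Stmt2.enc (Stmt2.pre d n) ≤ useq n := by
      intro n
      exact (Stmt2.gpt_gap_bounds d n).1.trans (hmem n).1.le
    have hushi : ∀ n, useq n ≤ Stmt2.enc (Stmt2.pre d n) + (1/3:ℝ)^(n+1) := by
      intro n
      exact ((hmem n).2.trans_le (Stmt2.gpt_gap_bounds d n).2).le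
    have husx : Tendsto useq atTop (nhds x) := by
      have hz : Tendsto (fun n : ℕ => useq n - x) atTop (nhds 0) := by
        refine squeeze_zero_norm (fun n => ?_) Stmt2.tendsto_w
        show ‖useq n - x‖ ≤ (1/3:ℝ)^(n+1)
        rw [Real.norm_eq_abs, abs_le]
        have h1 := huslo n
        have h2 := hxhi n
        have h3 := hushi n
        have h4 := hxlo n
        rw [hval n] at h1 h3 ⊢
        constructor <;> linarith
      have := hz.add_const x
      simpa using this
    -- rhat converges to ρ x
    have hIccsub : ∀ n s, s ∈ Icc (Stmt2.gapL (Stmt2.gpt d n)) (Stmt2.gapR (Stmt2.gpt d n)) →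
        |s - x| ≤ (1/3:ℝ)^(n+1) := by
      intro n s hs
      have h1 := (Stmt2.gpt_gap_bounds d n).1
      have h2 := (Stmt2.gpt_gap_bounds d n).2
      rw [abs_le]
      constructor
      · have := hs.1
        have := hxhi n
        linarith
      · have := hs.2
        have := hxlo n
        linarith
    have hrhat : Tendsto (fun n => Stmt2.rhat ρ (Stmt2.gpt d n)) atTop (nhds (ρ x)) := by
      rw [Metric.tendsto_atTop]
      intro ε hε
      obtain ⟨δ, hδ0, hδ⟩ := Metric.continuousAt_iff.mp hρc.continuousAt (ε/2) (half_pos hε)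
      obtain ⟨N, hN⟩ := exists_pow_lt_of_lt_one hδ0 (by norm_num : (1/3:ℝ) < 1)
      refine ⟨N, fun n hn => ?_⟩
      have hpow : (1/3:ℝ)^(n+1) < δ := by
        refine lt_of_le_of_lt ?_ hN
        apply pow_le_pow_of_le_one (by norm_num) (by norm_num)
        omega
      have hsball : ∀ s ∈ Icc (Stmt2.gapL (Stmt2.gpt d n)) (Stmt2.gapR (Stmt2.gpt d n)),
          dist (ρ s) (ρ x) < ε/2 := by
        intro s hs
        apply hδ
        rw [Real.dist_eq]
        exact lt_of_le_of_lt (hIccsub n s hs) hpow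
      have hGL : Stmt2.gapL (Stmt2.gpt d n) ∈
          Icc (Stmt2.gapL (Stmt2.gpt d n)) (Stmt2.gapR (Stmt2.gpt d n)) :=
        ⟨le_refl _, (hL n).le⟩
      have hub : Stmt2.rhat ρ (Stmt2.gpt d n) ≤ ρ (Stmt2.gapL (Stmt2.gpt d n)) :=
        Stmt2.rhat_le hρ0 hGL
      have hub2 : ρ (Stmt2.gapL (Stmt2.gpt d n)) < ρ x + ε/2 := by
        have := hsball _ hGL
        rw [Real.dist_eq, abs_lt] at this
        linarith [this.2]
      have hlb : ρ x - ε/2 ≤ Stmt2.rhat ρ (Stmt2.gpt d n) := by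
        refine le_csInf ⟨ρ (Stmt2.gapL (Stmt2.gpt d n)), mem_image_of_mem _ hGL⟩ ?_
        rintro y ⟨s, hs, rfl⟩
        have := hsball s hs
        rw [Real.dist_eq, abs_lt] at this
        linarith [this.1]
      rw [Real.dist_eq, abs_lt]
      constructor <;> linarith
    refine ⟨useq, fun n => (hDA n).differentiableAt, husx, ?_⟩
    have hderiv : (fun n => deriv f (useq n)) = fun n =>
        m (useq n) + Stmt2.rhat ρ (Stmt2.gpt d n) * Real.sin (2 * Real.pi * c) :=
      funext fun n => (hDA n).deriv
    rw [hderiv]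
    have hm1 : Tendsto (fun n => m (useq n)) atTop (nhds (m x)) :=
      (hmc.continuousAt.tendsto).comp husx
    exact hm1.add (hrhat.mul_const _)
  -- the Clarke subdifferential at Cantor points
  have hclarke : ∀ d : ℕ → Bool,
      clarke f (Stmt2.enc d) = Icc (m (Stmt2.enc d) - ρ (Stmt2.enc d))
        (m (Stmt2.enc d) + ρ (Stmt2.enc d)) := by
    intro d
    set x := Stmt2.enc d with hxdef
    set D : Set ℝ := {p : ℝ | ∃ u : ℕ → ℝ, (∀ n, DifferentiableAt ℝ f (u n)) ∧
      Tendsto u atTop (nhds x) ∧ Tendsto (fun n => deriv f (u n)) atTop (nhds p)} with hDdef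
    have hDsub : D ⊆ Icc (m x - ρ x) (m x + ρ x) := by
      rintro p ⟨u, hdiff, hux, hp⟩
      have h1 : ∀ n, deriv f (u n) ≤ m (u n) + ρ (u n) :=
        fun n => Stmt2.fdef_deriv_le hmc hρc hρ0 (hdiff n)
      have h2 : ∀ n, m (u n) - ρ (u n) ≤ deriv f (u n) :=
        fun n => Stmt2.fdef_deriv_ge hmc hρc hρ0 (hdiff n)
      have hup : Tendsto (fun n => m (u n) + ρ (u n)) atTop (nhds (m x + ρ x)) :=
        ((hmc.continuousAt.tendsto).comp hux).add ((hρc.continuousAt.tendsto).comp hux)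
      have hlo : Tendsto (fun n => m (u n) - ρ (u n)) atTop (nhds (m x - ρ x)) :=
        ((hmc.continuousAt.tendsto).comp hux).sub ((hρc.continuousAt.tendsto).comp hux)
      exact ⟨le_of_tendsto_of_tendsto' hlo hp h2, le_of_tendsto_of_tendsto' hp hup h1⟩
    have hbmem : m x + ρ x ∈ D := by
      obtain ⟨useq, h1, h2, h3⟩ := hseq d (1/4) (by norm_num) (by norm_num)
      have hsin : Real.sin (2 * Real.pi * (1/4)) = 1 := by
        rw [show 2 * Real.pi * (1/4:ℝ) = Real.pi / 2 by ring, Real.sin_pi_div_two]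
      rw [hsin, mul_one] at h3
      exact ⟨useq, h1, h2, h3⟩
    have hamem : m x - ρ x ∈ D := by
      obtain ⟨useq, h1, h2, h3⟩ := hseq d (3/4) (by norm_num) (by norm_num)
      have hsin : Real.sin (2 * Real.pi * (3/4)) = -1 := by
        rw [show 2 * Real.pi * (3/4:ℝ) = Real.pi / 2 + Real.pi by ring, Real.sin_add_pi,
          Real.sin_pi_div_two]
      rw [hsin] at h3
      have : m x + ρ x * (-1) = m x - ρ x := by ring
      rw [this] at h3
      exact ⟨useq, h1, h2, h3⟩
    have hab : m x - ρ x ≤ m x + ρ x := by linarith [hρ0 x]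
    rw [clarke]
    apply Subset.antisymm
    · calc convexHull ℝ D ⊆ convexHull ℝ (Icc (m x - ρ x) (m x + ρ x)) :=
          convexHull_mono hDsub
        _ = Icc (m x - ρ x) (m x + ρ x) := (convex_Icc _ _).convexHull_eq
    · calc Icc (m x - ρ x) (m x + ρ x) = segment ℝ (m x - ρ x) (m x + ρ x) :=
          (segment_eq_Icc hab).symm
        _ = convexHull ℝ {m x - ρ x, m x + ρ x} := (convexHull_pair _ _).symm
        _ ⊆ convexHull ℝ D := by
          apply convexHull_mono
          rintro p hp
          rcases hp with rfl | hp
          · exact hamem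
          · rw [mem_singleton_iff] at hp
            rw [hp]
            exact hbmem
  -- realize all values
  have hvals : ∀ a b : ℝ, -1 ≤ a → a ≤ b → b ≤ 1 → ∃ d : ℕ → Bool,
      m (Stmt2.enc d) - ρ (Stmt2.enc d) = a ∧ m (Stmt2.enc d) + ρ (Stmt2.enc d) = b := by
    intro a b ha hab hb1
    set u₀ : ℝ := (a + 1) / 2 with hu₀
    set v₀ : ℝ := if a = 1 then 0 else (b - a) / (1 - a) with hv₀
    have hu₀m : u₀ ∈ Icc (0:ℝ) 1 := ⟨by rw [hu₀]; linarith, by rw [hu₀]; linarith⟩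
    have hv₀m : v₀ ∈ Icc (0:ℝ) 1 := by
      rw [hv₀]
      split_ifs with h
      · exact ⟨le_refl _, zero_le_one⟩
      · have ha1 : a < 1 := lt_of_le_of_ne (hab.trans hb1) h
        constructor
        · exact div_nonneg (by linarith) (by linarith)
        · rw [div_le_one (by linarith)]
          linarith
    obtain ⟨du, hdu⟩ := Stmt2.theta_surj hu₀m
    obtain ⟨dv, hdv⟩ := Stmt2.theta_surj hv₀m
    set d := Stmt2.interleave du dv with hd
    refine ⟨d, ?_, ?_⟩
    · have hUx : U (Stmt2.enc d) = u₀ := by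
        rw [hUe d, hd, Stmt2.evens_interleave, hdu]
      have : m (Stmt2.enc d) - ρ (Stmt2.enc d) = 2 * U (Stmt2.enc d) - 1 := by
        rw [hmval]
        ring
      rw [this, hUx, hu₀]
      ring
    · have hUx : U (Stmt2.enc d) = u₀ := by
        rw [hUe d, hd, Stmt2.evens_interleave, hdu]
      have hVx : V (Stmt2.enc d) = v₀ := by
        rw [hVe d, hd, Stmt2.odds_interleave, hdv]
      have hsum : m (Stmt2.enc d) + ρ (Stmt2.enc d)
          = 2 * u₀ - 1 + 2 * (v₀ * (1 - u₀)) := by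
        rw [hmval, hρval, hUx, hVx]
        ring
      rw [hsum, hu₀]
      rw [hv₀]
      split_ifs with h
      · have : b = 1 := le_antisymm hb1 (h ▸ hab)
        rw [this, h]
        ring
      · have ha1 : a < 1 := lt_of_le_of_ne (hab.trans hb1) h
        have hne : (1:ℝ) - a ≠ 0 := by intro hh; apply h; linarith
        field_simp
        ring
  refine ⟨f, hlip, ?_, ?_⟩
  · -- minimality of the Lipschitz constant
    intro K hK
    obtain ⟨d, hd1, hd2⟩ := hvals (-1) 1 (le_refl _) (by norm_num) (le_refl _)
    obtain ⟨useq, h1, h2, h3⟩ := hseq d (1/4) (by norm_num) (by norm_num)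
    have hsin : Real.sin (2 * Real.pi * (1/4)) = 1 := by
      rw [show 2 * Real.pi * (1/4:ℝ) = Real.pi / 2 by ring, Real.sin_pi_div_two]
    rw [hsin, mul_one, hd2] at h3
    have hle : ∀ n, deriv f (useq n) ≤ (K : ℝ) := by
      intro n
      have := Stmt2.lip_deriv_le hK (h1 n)
      exact (le_abs_self _).trans this
    have h1K : (1 : ℝ) ≤ K := le_of_tendsto h3 (Filter.Eventually.of_forall hle)
    exact_mod_cast h1K
  · intro a b ha hab hb1
    obtain ⟨d, hd1, hd2⟩ := hvals a b ha hab hb1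
    refine ⟨Stmt2.enc d, ?_, ?_⟩
    · have := Stmt2.enc_mem d
      constructor
      · linarith [this.1]
      · linarith [this.2]
    · rw [hclarke d, hd1, hd2]
end

section
/- There exists a function σ : (0,1) → (0,1] with σ(ν) → 0 as ν → 0⁺ such that for every ν ∈ (0,1) and all x, h ∈ ℝ with h ≠ 0, one has (1/h) ∫ₓ^{x+h} |t|^ν dt ≥ |x|^ν (1 − σ(ν)). One can take σ(ν) = 1 − min_{y∈[0,1]} (1 + y^{1+ν}) / ((1+ν)(1+y)). -/
open Set Filter


lemma my_hasDerivAt {ν : ℝ} (hν : 0 < ν) (t : ℝ) :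
    HasDerivAt (fun t : ℝ => t * |t| ^ ν) ((1 + ν) * |t| ^ ν) t := by
  rcases lt_trichotomy t 0 with ht | rfl | ht
  · -- t < 0
    have h2 : HasDerivAt (fun s : ℝ => (-s) ^ (1 + ν))
        ((1 + ν) * (-t) ^ (1 + ν - 1) * (-1)) t :=
      (Real.hasDerivAt_rpow_const (Or.inl (by linarith : -t ≠ 0))).comp t (hasDerivAt_neg t)
    have h1 := h2.neg
    have e : 1 + ν - 1 = ν := by ring
    rw [e] at h1
    have h3 : HasDerivAt (fun s : ℝ => -((-s) ^ (1 + ν))) ((1 + ν) * |t| ^ ν) t := by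
      have h4 : (1 + ν) * |t| ^ ν = -((1 + ν) * (-t) ^ ν * -1) := by
        rw [abs_of_neg ht]; ring
      rw [h4]; exact h1
    refine h3.congr_of_eventuallyEq ?_
    filter_upwards [Iio_mem_nhds ht] with s hs
    have hs0 : s < 0 := hs
    rw [abs_of_neg hs0, Real.rpow_add' (by linarith : (0:ℝ) ≤ -s) (by positivity),
      Real.rpow_one]
    ring
  · -- t = 0
    rw [hasDerivAt_iff_tendsto_slope]
    have hc : Tendsto (fun s : ℝ => |s| ^ ν) (nhds (0:ℝ)) (nhds ((1 + ν) * |(0:ℝ)| ^ ν)) := by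
      have : ContinuousAt (fun s : ℝ => |s| ^ ν) 0 :=
        (Real.continuousAt_rpow_const _ _ (Or.inr hν.le)).comp continuous_abs.continuousAt
      have h0 : (1 + ν) * |(0:ℝ)| ^ ν = |(0:ℝ)| ^ ν := by
        rw [abs_zero, Real.zero_rpow hν.ne']; ring
      rw [h0]
      exact this.tendsto
    refine (hc.mono_left nhdsWithin_le_nhds).congr' ?_
    filter_upwards [self_mem_nhdsWithin] with s hs
    have hs' : s ≠ 0 := hs
    rw [slope_def_field]; simp only [zero_mul, sub_zero]; rw [mul_div_cancel_left₀ _ hs']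
  · -- t > 0
    have h2 : HasDerivAt (fun s : ℝ => s ^ (1 + ν)) ((1 + ν) * t ^ (1 + ν - 1)) t :=
      Real.hasDerivAt_rpow_const (Or.inl ht.ne')
    have e : 1 + ν - 1 = ν := by ring
    rw [e] at h2
    have h3 : HasDerivAt (fun s : ℝ => s ^ (1 + ν)) ((1 + ν) * |t| ^ ν) t := by
      rwa [abs_of_pos ht]
    refine h3.congr_of_eventuallyEq ?_
    filter_upwards [Ioi_mem_nhds ht] with s hs
    have hs0 : 0 < s := hs
    rw [abs_of_pos hs0, Real.rpow_add' hs0.le (by positivity), Real.rpow_one]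

lemma my_integral {ν : ℝ} (hν : 0 < ν) (a b : ℝ) :
    ∫ t in a..b, |t| ^ ν = (b * |b| ^ ν - a * |a| ^ ν) / (1 + ν) := by
  have hcont : Continuous fun t : ℝ => |t| ^ ν := by
    rw [continuous_iff_continuousAt]; intro x
    exact (Real.continuousAt_rpow_const _ _ (Or.inr hν.le)).comp continuous_abs.continuousAt
  have h := intervalIntegral.integral_eq_sub_of_hasDerivAt
    (f := fun t : ℝ => t * |t| ^ ν) (f' := fun t : ℝ => (1 + ν) * |t| ^ ν)
    (fun t _ => my_hasDerivAt hν t)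
    ((continuous_const.mul hcont).intervalIntegrable a b)
  rw [intervalIntegral.integral_const_mul] at h
  have hp : (1:ℝ) + ν ≠ 0 := by positivity
  field_simp at h ⊢
  linarith


lemma my_one_sided {ν m u v : ℝ} (hν : 0 ≤ ν) (hm0 : 0 ≤ m) (hm1 : m * (1 + ν) ≤ 1)
    (hu : 0 ≤ u) (huv : u ≤ v) :
    m * (1 + ν) * v ^ ν * (v - u) ≤ v * v ^ ν - u * u ^ ν := by
  have hv : 0 ≤ v := hu.trans huv
  have hA : 0 ≤ v ^ ν := Real.rpow_nonneg hv ν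
  have hBA : u ^ ν ≤ v ^ ν := Real.rpow_le_rpow hu huv hν
  nlinarith [mul_le_mul_of_nonneg_left hBA hu,
    mul_nonneg (sub_nonneg.2 hm1) (mul_nonneg hA (sub_nonneg.2 huv))]

lemma my_cross {ν m y v : ℝ} (hν : 0 ≤ ν) (hy : 0 ≤ y) (hv : 0 ≤ v)
    (hm : m * ((1 + ν) * (1 + y)) ≤ 1 + y ^ (1 + ν)) :
    m * (1 + ν) * v ^ ν * (y * v + v) ≤ (y * v) * (y * v) ^ ν + v * v ^ ν := by
  have h1 : (y * v) ^ ν = y ^ ν * v ^ ν := Real.mul_rpow hy hv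
  have h2 : y ^ (1 + ν) = y * y ^ ν := by
    rw [Real.rpow_add' hy (by positivity), Real.rpow_one]
  rw [h2] at hm
  have h3 := mul_le_mul_of_nonneg_right hm (mul_nonneg hv (Real.rpow_nonneg hv ν))
  calc m * (1 + ν) * v ^ ν * (y * v + v) = m * ((1 + ν) * (1 + y)) * (v * v ^ ν) := by ring
    _ ≤ (1 + y * y ^ ν) * (v * v ^ ν) := h3
    _ = (y * v) * (y * v) ^ ν + v * v ^ ν := by rw [h1]; ring


noncomputable def mval (ν : ℝ) : ℝ :=
  sInf ((fun y : ℝ => (1 + y ^ (1 + ν)) / ((1 + ν) * (1 + y))) '' Icc 0 1)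

lemma mval_bdd {ν : ℝ} (hν : 0 < ν) :
    BddBelow ((fun y : ℝ => (1 + y ^ (1 + ν)) / ((1 + ν) * (1 + y))) '' Icc 0 1) := by
  refine ⟨0, fun z hz => ?_⟩
  obtain ⟨y, hy, rfl⟩ := hz
  have h1 : 0 ≤ y ^ (1 + ν) := Real.rpow_nonneg hy.1 _
  have h2 : 0 < (1 + ν) * (1 + y) := by nlinarith [hy.1]
  positivity

lemma mval_le {ν : ℝ} (hν : 0 < ν) {y : ℝ} (hy : y ∈ Icc (0:ℝ) 1) :
    mval ν ≤ (1 + y ^ (1 + ν)) / ((1 + ν) * (1 + y)) :=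
  csInf_le (mval_bdd hν) (mem_image_of_mem _ hy)

lemma mval_nonneg {ν : ℝ} (hν : 0 < ν) : 0 ≤ mval ν := by
  refine le_csInf ⟨_, mem_image_of_mem _ (left_mem_Icc.mpr zero_le_one)⟩ fun z hz => ?_
  obtain ⟨y, hy, rfl⟩ := hz
  have h1 : 0 ≤ y ^ (1 + ν) := Real.rpow_nonneg hy.1 _
  have h2 : 0 < (1 + ν) * (1 + y) := by nlinarith [hy.1]
  positivity

lemma mval_mul_le_one {ν : ℝ} (hν : 0 < ν) : mval ν * (1 + ν) ≤ 1 := by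
  have h := mval_le hν (left_mem_Icc.mpr zero_le_one)
  rw [Real.zero_rpow (by positivity : (1:ℝ) + ν ≠ 0)] at h
  have hp : (0:ℝ) < 1 + ν := by linarith
  rw [le_div_iff₀ (by nlinarith)] at h
  nlinarith

lemma mval_lb {ν : ℝ} (hν : ν ∈ Ioo (0:ℝ) 1) :
    ν ^ ν / ((1 + ν) * (1 + ν)) ≤ mval ν := by
  refine le_csInf ⟨_, mem_image_of_mem _ (left_mem_Icc.mpr zero_le_one)⟩ fun z hz => ?_
  obtain ⟨y, hy, rfl⟩ := hz
  have hp : (0:ℝ) < 1 + ν := by linarith [hν.1]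
  have hνν0 : 0 ≤ ν ^ ν := Real.rpow_nonneg hν.1.le _
  have hνν1 : ν ^ ν ≤ 1 := Real.rpow_le_one hν.1.le hν.2.le hν.1.le
  have hyp0 : 0 ≤ y ^ (1 + ν) := Real.rpow_nonneg hy.1 _
  rw [div_le_div_iff₀ (by nlinarith) (by nlinarith [hy.1])]
  rcases le_total y ν with hc | hc
  · have t1 : (ν ^ ν * (1 + ν)) * (1 + y) ≤ (ν ^ ν * (1 + ν)) * (1 + ν) :=
      mul_le_mul_of_nonneg_left (by linarith) (mul_nonneg hνν0 hp.le)
    have t2 : ν ^ ν * ((1 + ν) * (1 + ν)) ≤ 1 * ((1 + ν) * (1 + ν)) :=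
      mul_le_mul_of_nonneg_right hνν1 (by positivity)
    nlinarith [mul_nonneg hyp0 (mul_nonneg hp.le hp.le)]
  · have h1 : ν ^ ν ≤ y ^ ν := Real.rpow_le_rpow hν.1.le hc hν.1.le
    have h2 : y ^ (1 + ν) = y * y ^ ν := by
      rw [Real.rpow_add' hy.1 (by positivity), Real.rpow_one]
    rw [h2]
    have hyy : y * ν ^ ν ≤ y * y ^ ν := mul_le_mul_of_nonneg_left h1 hy.1
    have key : ν ^ ν * (1 + y) ≤ 1 + y * y ^ ν := by nlinarith
    have h3 : (0:ℝ) ≤ 1 + y * y ^ ν := by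
      have := Real.rpow_nonneg hy.1 ν
      nlinarith [hy.1]
    nlinarith [mul_le_mul_of_nonneg_right key hp.le,
      mul_nonneg (mul_nonneg h3 hp.le) hν.1.le]

lemma my_tendsto : Tendsto (fun ν : ℝ => 1 - mval ν) (nhdsWithin 0 (Ioo 0 1)) (nhds 0) := by
  have hmono : nhdsWithin (0:ℝ) (Ioo 0 1) ≤ nhdsWithin 0 (Ioi 0) :=
    nhdsWithin_mono 0 Ioo_subset_Ioi_self
  have hxx : Tendsto (fun ν : ℝ => ν ^ ν) (nhdsWithin (0:ℝ) (Ioi 0)) (nhds 1) := by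
    have h := tendsto_log_mul_rpow_nhdsGT_zero zero_lt_one
    simp only [Real.rpow_one] at h
    have h2 := (Real.continuous_exp.continuousAt (x := (0:ℝ))).tendsto.comp h
    rw [Real.exp_zero] at h2
    refine h2.congr' ?_
    filter_upwards [self_mem_nhdsWithin] with ν hν
    exact (Real.rpow_def_of_pos hν ν).symm
  have hden : Tendsto (fun ν : ℝ => (1 + ν) * (1 + ν)) (nhdsWithin (0:ℝ) (Ioi 0)) (nhds 1) := by
    have hc : Continuous fun ν : ℝ => (1 + ν) * (1 + ν) := by continuity
    have h := (hc.continuousAt (x := (0:ℝ))).tendsto.mono_left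
      (nhdsWithin_le_nhds (s := Ioi (0:ℝ)))
    simpa using h
  have hg : Tendsto (fun ν : ℝ => 1 - ν ^ ν / ((1 + ν) * (1 + ν)))
      (nhdsWithin (0:ℝ) (Ioi 0)) (nhds 0) := by
    have hd := hxx.div hden one_ne_zero
    have := tendsto_const_nhds (α := ℝ) (f := nhdsWithin (0:ℝ) (Ioi 0)) (x := (1:ℝ)) |>.sub hd
    simpa using this
  refine tendsto_of_tendsto_of_tendsto_of_le_of_le' tendsto_const_nhds (hg.mono_left hmono) ?_ ?_
  · filter_upwards [self_mem_nhdsWithin] with ν hν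
    have h1 := mval_mul_le_one hν.1
    have h2 := mval_nonneg hν.1
    nlinarith [hν.1]
  · filter_upwards [self_mem_nhdsWithin] with ν hν
    linarith [mval_lb hν]


lemma my_key {ν : ℝ} (hν : ν ∈ Ioo (0:ℝ) 1) {a b x : ℝ} (hab : a < b)
    (hx : |x| ≤ max |a| |b|) :
    |x| ^ ν * mval ν * ((1 + ν) * (b - a)) ≤ b * |b| ^ ν - a * |a| ^ ν := by
  have hm0 := mval_nonneg hν.1
  have hm1 := mval_mul_le_one hν.1
  have hν0 := hν.1.le
  have hp : (0:ℝ) < 1 + ν := by linarith [hν.1]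
  set m := mval ν with hmdef
  rcases le_or_gt 0 a with ha | ha
  · have hb : 0 ≤ b := ha.trans hab.le
    rw [abs_of_nonneg ha, abs_of_nonneg hb] at hx ⊢
    rw [max_eq_right hab.le] at hx
    have h1 := my_one_sided hν0 hm0 hm1 ha hab.le
    have h2 : |x| ^ ν ≤ b ^ ν := Real.rpow_le_rpow (abs_nonneg x) hx hν0
    have hc : (0:ℝ) ≤ m * (1 + ν) * (b - a) :=
      mul_nonneg (mul_nonneg hm0 hp.le) (by linarith)
    nlinarith [mul_le_mul_of_nonneg_right h2 hc]
  · rcases le_or_gt b 0 with hb | hb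
    · rw [abs_of_neg ha, abs_of_nonpos hb] at hx ⊢
      rw [max_eq_left (by linarith : -b ≤ -a)] at hx
      have h1 := my_one_sided hν0 hm0 hm1 (by linarith : (0:ℝ) ≤ -b) (by linarith : -b ≤ -a)
      have h2 : |x| ^ ν ≤ (-a) ^ ν := Real.rpow_le_rpow (abs_nonneg x) hx hν0
      have hc : (0:ℝ) ≤ m * (1 + ν) * (b - a) :=
        mul_nonneg (mul_nonneg hm0 hp.le) (by linarith)
      nlinarith [mul_le_mul_of_nonneg_right h2 hc]
    · rw [abs_of_neg ha, abs_of_pos hb] at hx ⊢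
      rcases le_total (-a) b with hs | hs
      · rw [max_eq_right hs] at hx
        set y : ℝ := -a / b with hydef
        have hy : y ∈ Icc (0:ℝ) 1 :=
          ⟨div_nonneg (by linarith) hb.le, (div_le_one hb).2 hs⟩
        have hmm : m * ((1 + ν) * (1 + y)) ≤ 1 + y ^ (1 + ν) := by
          have := mval_le hν.1 hy
          rwa [le_div_iff₀ (by nlinarith [hy.1])] at this
        have hcross := my_cross hν0 hy.1 hb.le hmm
        have hyb : y * b = -a := div_mul_cancel₀ _ hb.ne'
        rw [hyb] at hcross
        have h2 : |x| ^ ν ≤ b ^ ν := Real.rpow_le_rpow (abs_nonneg x) hx hν0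
        have hc : (0:ℝ) ≤ m * (1 + ν) * (b - a) :=
          mul_nonneg (mul_nonneg hm0 hp.le) (by linarith)
        nlinarith [mul_le_mul_of_nonneg_right h2 hc]
      · rw [max_eq_left hs] at hx
        set y : ℝ := b / -a with hydef
        have hna : (0:ℝ) < -a := by linarith
        have hy : y ∈ Icc (0:ℝ) 1 :=
          ⟨div_nonneg hb.le hna.le, (div_le_one hna).2 hs⟩
        have hmm : m * ((1 + ν) * (1 + y)) ≤ 1 + y ^ (1 + ν) := by
          have := mval_le hν.1 hy
          rwa [le_div_iff₀ (by nlinarith [hy.1])] at this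
        have hcross := my_cross hν0 hy.1 hna.le hmm
        have hyb : y * -a = b := div_mul_cancel₀ _ hna.ne'
        rw [hyb] at hcross
        have h2 : |x| ^ ν ≤ (-a) ^ ν := Real.rpow_le_rpow (abs_nonneg x) hx hν0
        have hc : (0:ℝ) ≤ m * (1 + ν) * (b - a) :=
          mul_nonneg (mul_nonneg hm0 hp.le) (by linarith)
        nlinarith [mul_le_mul_of_nonneg_right h2 hc]

/-- **lower integral estimation I.** There is `σ : (0,1) → (0,1]` with
`σ(ν) → 0` as `ν → 0⁺` such that `(1/h)∫ₓ^{x+h} |t|^ν dt ≥ |x|^ν (1 − σ(ν))` for all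
`x, h ∈ ℝ`, `h ≠ 0`; one can take
`σ(ν) = 1 − min_{y ∈ [0,1]} (1 + y^{1+ν}) / ((1+ν)(1+y))`. -/

theorem stmt_4 :
    ∃ σ : ℝ → ℝ,
      (∀ ν ∈ Ioo (0:ℝ) 1, σ ν ∈ Ioc (0:ℝ) 1) ∧
      Tendsto σ (nhdsWithin 0 (Ioo 0 1)) (nhds 0) ∧
      (∀ ν ∈ Ioo (0:ℝ) 1,
        σ ν = 1 - sInf ((fun y : ℝ => (1 + y ^ (1 + ν)) / ((1 + ν) * (1 + y))) '' Icc 0 1)) ∧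
      ∀ ν ∈ Ioo (0:ℝ) 1, ∀ x h : ℝ, h ≠ 0 →
        |x| ^ ν * (1 - σ ν) ≤ (1 / h) * ∫ t in x..(x + h), |t| ^ ν := by
  refine ⟨fun ν => 1 - mval ν, ?_, my_tendsto, fun ν _ => rfl, ?_⟩
  · intro ν hν
    have h1 := mval_mul_le_one hν.1
    have h0 := mval_nonneg hν.1
    constructor
    · show (0:ℝ) < 1 - mval ν
      nlinarith [hν.1]
    · show 1 - mval ν ≤ 1
      linarith
  · intro ν hν x h hh
    have hp : (0:ℝ) < 1 + ν := by linarith [hν.1]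
    rw [sub_sub_cancel, my_integral hν.1 x (x + h)]
    rcases hh.lt_or_gt with hneg | hpos
    · have K := my_key hν (show x + h < x by linarith) (le_max_right |x + h| |x|)
      have e : (1 / h) * (((x + h) * |x + h| ^ ν - x * |x| ^ ν) / (1 + ν))
          = (x * |x| ^ ν - (x + h) * |x + h| ^ ν) / ((1 + ν) * -h) := by
        field_simp
        ring
      rw [e, le_div_iff₀ (mul_pos hp (by linarith : (0:ℝ) < -h))]
      nlinarith [K]
    · have K := my_key hν (show x < x + h by linarith) (le_max_left |x| |x + h|)
      have e : (1 / h) * (((x + h) * |x + h| ^ ν - x * |x| ^ ν) / (1 + ν))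
          = ((x + h) * |x + h| ^ ν - x * |x| ^ ν) / ((1 + ν) * h) := by
        field_simp
      rw [e, le_div_iff₀ (by positivity : (0:ℝ) < (1 + ν) * h)]
      nlinarith [K]
end

section
/- There exists a function σ : (0,1) → (0,1] with σ(ν) → 0 as ν → 0⁺ such that for every ν ∈ (0,1), every d ∈ ℝ, every m > 0, and every ε > 0, the function R(t) = min{ m^ν, (|t−d|/ε)^ν } satisfies, for all x, h ∈ ℝ with h ≠ 0, the estimate (1/h) ∫ₓ^{x+h} R(t) dt ≥ R(x)(1 − σ(ν)). One can take σ(ν) = 1 − min_{y∈[0,1]} (1+y^{1+ν})/((1+ν)(1+y)); in particular the estimate does not depend on the parameters ε, d, m. -/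
open Set Filter
open MeasureTheory intervalIntegral

noncomputable def cfun (ν : ℝ) : ℝ :=
  sInf ((fun y : ℝ => (1 + y ^ (1 + ν)) / ((1 + ν) * (1 + y))) '' Icc 0 1)

lemma cfun_le (hν : (0:ℝ) < ν) {a : ℝ} (ha : a ∈ Icc (0:ℝ) 1) :
    cfun ν ≤ (1 + a ^ (1 + ν)) / ((1 + ν) * (1 + a)) := by
  apply csInf_le
  · refine ⟨0, fun z hz => ?_⟩
    rcases hz with ⟨y, hy, rfl⟩
    have h1 : (0:ℝ) ≤ 1 + y ^ (1+ν) := by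
      have := Real.rpow_nonneg hy.1 (1+ν); linarith
    have h2 : (0:ℝ) < (1+ν) * (1+y) := by nlinarith [hy.1]
    exact div_nonneg h1 h2.le
  · exact ⟨a, ha, rfl⟩

lemma cfun_le_inv (hν : (0:ℝ) < ν) : cfun ν ≤ 1 / (1 + ν) := by
  have h := cfun_le hν (a := 0) (by simp)
  rwa [Real.zero_rpow (by positivity), add_zero, mul_one] at h
  

lemma cfun_nonneg (hν : (0:ℝ) < ν) : 0 ≤ cfun ν := by
  apply le_csInf
  · exact ⟨_, ⟨0, by simp, rfl⟩⟩
  · rintro z ⟨y, hy, rfl⟩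
    have h1 : (0:ℝ) ≤ 1 + y ^ (1+ν) := by
      have := Real.rpow_nonneg hy.1 (1+ν); linarith
    have h2 : (0:ℝ) < (1+ν) * (1+y) := by nlinarith [hy.1]
    exact div_nonneg h1 h2.le

lemma cont_min_abs_rpow (M ν : ℝ) (hν : 0 ≤ ν) :
    Continuous (fun z : ℝ => min M (|z| ^ ν)) :=
  continuous_const.min (continuous_abs.rpow_const fun _ => Or.inr hν)

lemma avg_mono {f g : ℝ → ℝ} {a k : ℝ} (hk : k ≠ 0)
    (hf : IntervalIntegrable f volume a (a+k))
    (hg : IntervalIntegrable g volume a (a+k))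
    (h : ∀ t ∈ Set.uIcc a (a+k), f t ≤ g t) :
    (1/k) * ∫ t in a..(a+k), f t ≤ (1/k) * ∫ t in a..(a+k), g t := by
  rcases hk.lt_or_gt with hk' | hk'
  · have hle : a + k ≤ a := by linarith
    have hmono : (∫ t in (a+k)..a, f t) ≤ ∫ t in (a+k)..a, g t := by
      apply intervalIntegral.integral_mono_on hle hf.symm hg.symm
      intro t ht
      exact h t (by rw [Set.uIcc_comm, Set.uIcc_of_le hle]; exact ht)
    rw [intervalIntegral.integral_symm (a+k) a (f := f),
      intervalIntegral.integral_symm (a+k) a (f := g)]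
    have h1k : (1:ℝ)/k < 0 := div_neg_of_pos_of_neg one_pos hk'
    nlinarith
  · have hle : a ≤ a + k := by linarith
    have hmono : (∫ t in a..(a+k), f t) ≤ ∫ t in a..(a+k), g t := by
      apply intervalIntegral.integral_mono_on hle hf hg
      intro t ht
      exact h t (by rwa [Set.uIcc_of_le hle])
    have h1k : (0:ℝ) ≤ 1/k := by positivity
    nlinarith

lemma integral_phi0_nonneg_seg {ν a : ℝ} (hν : 0 < ν) (ha0 : 0 ≤ a) (ha1 : a ≤ 1) :
    (∫ z in (0:ℝ)..a, min 1 (|z| ^ ν)) = a ^ (ν + 1) / (ν + 1) := by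
  have hcong : Set.EqOn (fun z : ℝ => min 1 (|z| ^ ν)) (fun z : ℝ => z ^ ν) (Set.uIcc 0 a) := by
    intro z hz
    rw [Set.uIcc_of_le ha0] at hz
    have hz0 : 0 ≤ z := hz.1
    have hz1 : z ≤ 1 := le_trans hz.2 ha1
    simp only [abs_of_nonneg hz0]
    exact min_eq_right (Real.rpow_le_one hz0 hz1 hν.le)
  rw [intervalIntegral.integral_congr hcong, integral_rpow (Or.inl (by linarith : (-1:ℝ) < ν)),
    Real.zero_rpow (by positivity), sub_zero]

lemma integral_phi0_neg_seg {ν a : ℝ} (hν : 0 < ν) (ha0 : 0 ≤ a) (ha1 : a ≤ 1) :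
    (∫ z in (-a)..(0:ℝ), min 1 (|z| ^ ν)) = a ^ (ν + 1) / (ν + 1) := by
  have h := intervalIntegral.integral_comp_neg (a := (0:ℝ)) (b := a)
    (fun z : ℝ => min 1 (|z| ^ ν))
  simp only [abs_neg, neg_zero] at h
  rw [← h]
  exact integral_phi0_nonneg_seg hν ha0 ha1

lemma coreC {ν : ℝ} (hν : ν ∈ Ioo (0:ℝ) 1) {k : ℝ} (hk : k ≠ 0) :
    cfun ν ≤ (1/k) * ∫ z in (1:ℝ)..(1+k), min 1 (|z| ^ ν) := by
  obtain ⟨hν0, hν1⟩ := hν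
  have h1ν : (0:ℝ) < 1 + ν := by linarith
  have hcle : cfun ν ≤ 1 / (1 + ν) := cfun_le_inv hν0
  have hint : ∀ a b : ℝ, IntervalIntegrable (fun z : ℝ => min 1 (|z| ^ ν)) volume a b :=
    fun a b => (cont_min_abs_rpow 1 ν hν0.le).intervalIntegrable a b
  rcases hk.lt_or_gt with hkneg | hkpos
  · -- k < 0
    rcases le_or_gt 0 (1 + k) with hy0 | hy0
    · -- 0 ≤ 1 + k : pure power on [1+k, 1]
      have hcong : Set.EqOn (fun z : ℝ => min 1 (|z| ^ ν)) (fun z : ℝ => z ^ ν)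
          (Set.uIcc 1 (1+k)) := by
        intro z hz
        rw [Set.uIcc_comm, Set.uIcc_of_le (by linarith : 1 + k ≤ 1)] at hz
        have hz0 : 0 ≤ z := le_trans hy0 hz.1
        simp only [abs_of_nonneg hz0]
        exact min_eq_right (Real.rpow_le_one hz0 hz.2 hν0.le)
      rw [intervalIntegral.integral_congr hcong,
        integral_rpow (Or.inl (by linarith : (-1:ℝ) < ν)), Real.one_rpow]
      have key : (1 + k) ^ (ν + 1) ≤ 1 + k := by
        calc (1+k) ^ (ν+1) ≤ (1+k) ^ (1:ℝ) :=
              Real.rpow_le_rpow_of_exponent_ge' hy0 (by linarith) one_pos.le (by linarith)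
          _ = 1 + k := Real.rpow_one _
      have h2 : 1 ≤ ((1+k) ^ (ν+1) - 1) / k := by
        rw [le_div_iff_of_neg hkneg]; linarith
      calc cfun ν ≤ 1 / (1 + ν) := hcle
        _ ≤ (((1+k) ^ (ν+1) - 1) / k) / (1 + ν) := by gcongr
        _ = 1/k * (((1+k) ^ (ν+1) - 1) / (ν + 1)) := by ring
    · rcases le_or_gt (-1) (1 + k) with hp | hp
      · -- -1 ≤ 1 + k < 0
        set a : ℝ := -(1+k) with ha
        have ha0 : 0 ≤ a := by simp [ha]; linarith
        have ha1 : a ≤ 1 := by simp [ha]; linarith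
        have hsplit : (∫ z in (1+k)..(0:ℝ), min 1 (|z| ^ ν))
            + (∫ z in (0:ℝ)..1, min 1 (|z| ^ ν)) = ∫ z in (1+k)..(1:ℝ), min 1 (|z| ^ ν) :=
          intervalIntegral.integral_add_adjacent_intervals (hint _ _) (hint _ _)
        have e1 : (∫ z in (1+k)..(0:ℝ), min 1 (|z| ^ ν)) = a ^ (ν + 1) / (ν + 1) := by
          have := integral_phi0_neg_seg (a := a) hν0 ha0 ha1
          rwa [show -a = 1 + k by rw [ha]; ring] at this
        have e2 : (∫ z in (0:ℝ)..1, min 1 (|z| ^ ν)) = 1 / (ν + 1) := by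
          have := integral_phi0_nonneg_seg (a := 1) hν0 zero_le_one le_rfl
          rwa [Real.one_rpow] at this
        have etot : (∫ z in (1:ℝ)..(1+k), min 1 (|z| ^ ν))
            = -((a ^ (ν + 1) + 1) / (ν + 1)) := by
          rw [intervalIntegral.integral_symm (1+k) 1, ← hsplit, e1, e2]; ring
        rw [etot]
        have h1a : 1 + a = -k := by rw [ha]; ring
        have := cfun_le hν0 (a := a) ⟨ha0, ha1⟩
        calc cfun ν ≤ (1 + a ^ (1 + ν)) / ((1 + ν) * (1 + a)) := this
          _ = 1/k * -((a ^ (ν + 1) + 1) / (ν + 1)) := by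
              rw [add_comm 1 ν, h1a]
              generalize a ^ (ν + 1) = A
              have hν1' : (ν:ℝ) + 1 ≠ 0 := by linarith
              field_simp
              ring
      · -- 1 + k < -1
        have hsplit1 : (∫ z in (1+k)..(-1:ℝ), min 1 (|z| ^ ν))
            + (∫ z in (-1:ℝ)..(1:ℝ), min 1 (|z| ^ ν)) = ∫ z in (1+k)..(1:ℝ), min 1 (|z| ^ ν) :=
          intervalIntegral.integral_add_adjacent_intervals (hint _ _) (hint _ _)
        have hsplit2 : (∫ z in (-1:ℝ)..(0:ℝ), min 1 (|z| ^ ν))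
            + (∫ z in (0:ℝ)..(1:ℝ), min 1 (|z| ^ ν)) = ∫ z in (-1:ℝ)..(1:ℝ), min 1 (|z| ^ ν) :=
          intervalIntegral.integral_add_adjacent_intervals (hint _ _) (hint _ _)
        have e1 : (∫ z in (1+k)..(-1:ℝ), min 1 (|z| ^ ν)) = -1 - (1+k) := by
          have hcong : Set.EqOn (fun z : ℝ => min 1 (|z| ^ ν)) (fun _ : ℝ => (1:ℝ))
              (Set.uIcc (1+k) (-1)) := by
            intro z hz
            rw [Set.uIcc_of_le (by linarith : 1 + k ≤ -1)] at hz
            have : (1:ℝ) ≤ |z| := by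
              rw [abs_of_nonpos (by linarith [hz.2] : z ≤ 0)]; linarith [hz.2]
            exact min_eq_left (Real.one_le_rpow this hν0.le)
          rw [intervalIntegral.integral_congr hcong, intervalIntegral.integral_const]
          simp
        have e2 : (∫ z in (-1:ℝ)..(0:ℝ), min 1 (|z| ^ ν)) = 1 / (ν + 1) := by
          have := integral_phi0_neg_seg (a := 1) hν0 zero_le_one le_rfl
          rwa [Real.one_rpow] at this
        have e3 : (∫ z in (0:ℝ)..(1:ℝ), min 1 (|z| ^ ν)) = 1 / (ν + 1) := by
          have := integral_phi0_nonneg_seg (a := 1) hν0 zero_le_one le_rfl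
          rwa [Real.one_rpow] at this
        have etot : (∫ z in (1:ℝ)..(1+k), min 1 (|z| ^ ν))
            = -((-1 - (1+k)) + 2 / (ν + 1)) := by
          rw [intervalIntegral.integral_symm (1+k) 1, ← hsplit1, ← hsplit2, e1, e2, e3]; ring
        rw [etot]
        have heq : 1/k * -((-1 - (1+k)) + 2 / (ν + 1))
            = ((-1 - (1+k)) + 2 / (ν + 1)) / (-k) := by
          have hν1' : (ν:ℝ) + 1 ≠ 0 := by linarith
          field_simp
        rw [heq]
        have hB : (0:ℝ) ≤ (-1 - (1+k)) + 2 / (ν + 1) := by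
          have h1 : (0:ℝ) ≤ -1 - (1+k) := by linarith
          have h2 : (0:ℝ) ≤ 2 / (ν + 1) := by positivity
          linarith
        calc cfun ν ≤ 1 / (1 + ν) := hcle
          _ ≤ ((-1 - (1+k)) + 2 / (ν + 1)) / (-k) := by
              rw [div_le_div_iff₀ h1ν (by linarith : (0:ℝ) < -k)]
              have h2 : 2 / (ν + 1) * (1 + ν) = 2 := by field_simp; ring
              nlinarith
  · -- 0 < k
    have hcong : Set.EqOn (fun z : ℝ => min 1 (|z| ^ ν)) (fun _ : ℝ => (1:ℝ))
        (Set.uIcc 1 (1+k)) := by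
      intro z hz
      rw [Set.uIcc_of_le (by linarith : (1:ℝ) ≤ 1 + k)] at hz
      have : (1:ℝ) ≤ |z| := le_trans hz.1 (le_abs_self z)
      exact min_eq_left (Real.one_le_rpow this hν0.le)
    rw [intervalIntegral.integral_congr hcong, intervalIntegral.integral_const]
    calc cfun ν ≤ 1 / (1 + ν) := hcle
      _ ≤ 1 := by rw [div_le_one h1ν]; linarith
      _ = 1/k * ((1 + k - 1) • (1:ℝ)) := by field_simp; simp

lemma pointwise_bound {ν M u : ℝ} (hν : 0 < ν) (hM : 0 < M) (hu : 0 < u) (w : ℝ) :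
    min M (u ^ ν) * min 1 ((|w| / u) ^ ν) ≤ min M (|w| ^ ν) := by
  set r := |w| with hr
  have hr0 : 0 ≤ r := abs_nonneg w
  have hupos : (0:ℝ) < u ^ ν := Real.rpow_pos_of_pos hu ν
  rcases le_or_gt u r with h | h
  · rw [min_eq_left (Real.one_le_rpow ((one_le_div hu).mpr h) hν.le), mul_one]
    exact min_le_min le_rfl (Real.rpow_le_rpow hu.le h hν.le)
  · have hdiv : (r / u) ^ ν ≤ 1 :=
      Real.rpow_le_one (div_nonneg hr0 hu.le) ((div_le_one hu).mpr h.le) hν.le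
    rw [min_eq_right hdiv, Real.div_rpow hr0 hu.le]
    have hrν : r ^ ν ≤ u ^ ν := Real.rpow_le_rpow hr0 h.le hν.le
    have hrν0 : 0 ≤ r ^ ν := Real.rpow_nonneg hr0 ν
    rcases le_total (u ^ ν) M with hm | hm
    · rw [min_eq_right hm]
      rw [mul_div_assoc', mul_comm, mul_div_assoc, div_self hupos.ne', mul_one]
      exact le_min (le_trans hrν hm) le_rfl
    · rw [min_eq_left hm]
      have hq : r ^ ν / u ^ ν ≤ 1 := (div_le_one hupos).mpr hrν
      refine le_min ?_ ?_
      · nlinarith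
      · have : M / u ^ ν ≤ 1 := (div_le_one hupos).mpr hm
        have h2 : M * (r ^ ν / u ^ ν) = (M / u ^ ν) * r ^ ν := by ring
        rw [h2]
        nlinarith

lemma coreC' {ν u k : ℝ} (hν : ν ∈ Ioo (0:ℝ) 1) (hu : 0 < u) (hk : k ≠ 0) :
    cfun ν ≤ (1/k) * ∫ w in u..(u+k), min 1 ((|w| / u) ^ ν) := by
  have hfe : (fun w : ℝ => min 1 ((|w| / u) ^ ν))
      = fun w : ℝ => min 1 (|w / u| ^ ν) := by
    funext w; rw [abs_div, abs_of_pos hu]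
  rw [hfe]
  have hcv := intervalIntegral.integral_comp_div (a := u) (b := u + k)
    (f := fun z : ℝ => min 1 (|z| ^ ν)) (c := u) hu.ne'
  rw [hcv, div_self hu.ne', show (u + k) / u = 1 + k / u by field_simp]
  have hk' : k / u ≠ 0 := div_ne_zero hk hu.ne'
  have := coreC hν hk'
  have heq : (1/k) * (u • ∫ z in (1:ℝ)..(1 + k / u), min 1 (|z| ^ ν))
      = (1/(k/u)) * ∫ z in (1:ℝ)..(1 + k / u), min 1 (|z| ^ ν) := by
    rw [smul_eq_mul, one_div_div]
    field_simp
  rw [heq]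
  exact this

lemma K0 {ν M u k : ℝ} (hν : ν ∈ Ioo (0:ℝ) 1) (hM : 0 < M) (hu : 0 ≤ u) (hk : k ≠ 0) :
    min M (|u| ^ ν) * cfun ν ≤ (1/k) * ∫ w in u..(u+k), min M (|w| ^ ν) := by
  have hνIcc := hν
  obtain ⟨hν0, hν1⟩ := hν
  have hintφ : IntervalIntegrable (fun w : ℝ => min M (|w| ^ ν)) volume u (u+k) :=
    (cont_min_abs_rpow M ν hν0.le).intervalIntegrable _ _
  rcases hu.eq_or_lt with h0 | h0
  · -- u = 0
    rw [← h0, abs_zero, Real.zero_rpow hν0.ne', min_eq_right hM.le, zero_mul]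
    have := avg_mono (f := fun _ : ℝ => (0:ℝ)) (g := fun w : ℝ => min M (|w| ^ ν)) hk
      (intervalIntegrable_const) (by rw [← h0] at hintφ; exact hintφ)
      (fun t _ => le_min hM.le (Real.rpow_nonneg (abs_nonneg t) ν))
    simpa using this
  · -- 0 < u
    have hA0 : 0 ≤ min M (u ^ ν) := le_min hM.le (Real.rpow_nonneg hu ν)
    have hcontψ : Continuous (fun w : ℝ => min M (u ^ ν) * min 1 ((|w| / u) ^ ν)) := by
      apply continuous_const.mul
      exact continuous_const.min ((continuous_abs.div_const u).rpow_const fun _ => Or.inr hν0.le)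
    have step1 := avg_mono (f := fun w : ℝ => min M (u ^ ν) * min 1 ((|w| / u) ^ ν))
      (g := fun w : ℝ => min M (|w| ^ ν)) hk (hcontψ.intervalIntegrable _ _) hintφ
      (fun t _ => pointwise_bound hν0 hM h0 t)
    have step2 : min M (|u| ^ ν) * cfun ν
        ≤ (1/k) * ∫ w in u..(u+k), min M (u ^ ν) * min 1 ((|w| / u) ^ ν) := by
      rw [intervalIntegral.integral_const_mul, abs_of_pos h0]
      have := coreC' hνIcc h0 hk
      calc min M (u ^ ν) * cfun ν
          ≤ min M (u ^ ν) * ((1/k) * ∫ w in u..(u+k), min 1 ((|w| / u) ^ ν)) := by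
            exact mul_le_mul_of_nonneg_left this hA0
        _ = (1/k) * (min M (u ^ ν) * ∫ w in u..(u+k), min 1 ((|w| / u) ^ ν)) := by ring
    exact le_trans step2 step1

lemma Kgen {ν M u k : ℝ} (hν : ν ∈ Ioo (0:ℝ) 1) (hM : 0 < M) (hk : k ≠ 0) :
    min M (|u| ^ ν) * cfun ν ≤ (1/k) * ∫ w in u..(u+k), min M (|w| ^ ν) := by
  rcases le_or_gt 0 u with hu | hu
  · exact K0 hν hM hu hk
  · have hk' : -k ≠ 0 := neg_ne_zero.mpr hk
    have := K0 (u := -u) (k := -k) hν hM (by linarith) hk'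
    have hneg := intervalIntegral.integral_comp_neg (a := u + k) (b := u)
      (fun w : ℝ => min M (|w| ^ ν))
    simp only [abs_neg] at hneg
    -- hneg : ∫ x in u+k..u, min M (|x|^ν) = ∫ x in -u..-(u+k), min M (|x|^ν)
    have h2 : (∫ w in (-u)..(-u + -k), min M (|w| ^ ν))
        = -∫ w in u..(u+k), min M (|w| ^ ν) := by
      rw [show -u + -k = -(u+k) by ring, ← hneg, intervalIntegral.integral_symm]
    rw [h2, abs_neg] at this
    calc min M (|u| ^ ν) * cfun ν
        ≤ (1/(-k)) * -∫ w in u..(u+k), min M (|w| ^ ν) := this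
      _ = (1/k) * ∫ w in u..(u+k), min M (|w| ^ ν) := by
          field_simp

lemma texp_le {t : ℝ} : t * Real.exp (-t) ≤ (Real.exp 1)⁻¹ := by
  rcases le_or_gt t 0 with ht | ht
  · have h1 : t * Real.exp (-t) ≤ 0 := mul_nonpos_of_nonpos_of_nonneg ht (Real.exp_pos _).le
    have h2 : (0:ℝ) ≤ (Real.exp 1)⁻¹ := by positivity
    linarith
  · have hexp : t ≤ Real.exp (t - 1) := by
      have := Real.add_one_le_exp (t - 1); linarith
    have h1 : t * Real.exp (-t) ≤ Real.exp (t - 1) * Real.exp (-t) :=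
      mul_le_mul_of_nonneg_right hexp (Real.exp_pos _).le
    have h2 : Real.exp (t - 1) * Real.exp (-t) = (Real.exp 1)⁻¹ := by
      rw [← Real.exp_add, show t - 1 + -t = -1 by ring, Real.exp_neg]
    linarith

lemma mul_log_ge {y : ℝ} (hy0 : 0 < y) (hy1 : y ≤ 1) : -(Real.exp 1)⁻¹ ≤ y * Real.log y := by
  have h := texp_le (t := -Real.log y)
  rw [neg_neg, Real.exp_log hy0] at h
  nlinarith [h]

lemma cfun_lower {ν : ℝ} (hν : ν ∈ Ioo (0:ℝ) 1) :
    (1 - ν * (Real.exp 1)⁻¹) / (1 + ν) ≤ cfun ν := by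
  obtain ⟨hν0, hν1⟩ := hν
  have h1ν : (0:ℝ) < 1 + ν := by linarith
  have hne : ((fun y : ℝ => (1 + y ^ (1 + ν)) / ((1 + ν) * (1 + y))) '' Icc 0 1).Nonempty :=
    ⟨_, ⟨0, by simp, rfl⟩⟩
  apply le_csInf hne
  rintro z ⟨y, ⟨hy0, hy1⟩, rfl⟩
  simp only
  rcases hy0.eq_or_lt with h0 | h0
  · rw [← h0, Real.zero_rpow (by positivity), add_zero, mul_one,
      div_le_div_iff₀ h1ν h1ν]
    have : 0 ≤ ν * (Real.exp 1)⁻¹ := by positivity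
    nlinarith
  · -- 0 < y
    have hrpow : y - ν * (Real.exp 1)⁻¹ ≤ y ^ (1 + ν) := by
      have hexp : y ^ ν = Real.exp (Real.log y * ν) := Real.rpow_def_of_pos h0 ν
      have h1 : Real.log y * ν + 1 ≤ y ^ ν := by
        rw [hexp]; exact Real.add_one_le_exp _
      have h2 : y ^ (1 + ν) = y * y ^ ν := by
        rw [Real.rpow_add h0, Real.rpow_one]
      have h3 := mul_log_ge h0 hy1
      have h4 : y * (Real.log y * ν + 1) ≤ y * y ^ ν :=
        mul_le_mul_of_nonneg_left h1 h0.le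
      have h6 : -(Real.exp 1)⁻¹ * ν ≤ (y * Real.log y) * ν :=
        mul_le_mul_of_nonneg_right h3 hν0.le
      rw [h2]
      nlinarith
    rw [div_le_div_iff₀ h1ν (by positivity : (0:ℝ) < (1 + ν) * (1 + y))]
    have hE : 0 ≤ ν * (Real.exp 1)⁻¹ := by positivity
    nlinarith [mul_nonneg (mul_nonneg hν0.le (le_of_lt (inv_pos.mpr (Real.exp_pos 1)))) hy0]


/-- **lower integral estimation II.** There is `σ : (0,1) → (0,1]` with
`σ(ν) → 0` as `ν → 0⁺` such that for all parameters `d ∈ ℝ`, `m > 0`, `ε > 0`, the function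
`R(t) = min{m^ν, (|t−d|/ε)^ν}` satisfies `(1/h)∫ₓ^{x+h} R(t) dt ≥ R(x)(1 − σ(ν))` for all
`x, h ∈ ℝ`, `h ≠ 0`; one can take
`σ(ν) = 1 − min_{y ∈ [0,1]} (1 + y^{1+ν}) / ((1+ν)(1+y))`, so the estimate does not depend
on `ε`, `d`, `m`. -/
theorem stmt_5 :
    ∃ σ : ℝ → ℝ,
      (∀ ν ∈ Ioo (0:ℝ) 1, σ ν ∈ Ioc (0:ℝ) 1) ∧
      Tendsto σ (nhdsWithin 0 (Ioo 0 1)) (nhds 0) ∧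
      (∀ ν ∈ Ioo (0:ℝ) 1,
        σ ν = 1 - sInf ((fun y : ℝ => (1 + y ^ (1 + ν)) / ((1 + ν) * (1 + y))) '' Icc 0 1)) ∧
      ∀ ν ∈ Ioo (0:ℝ) 1, ∀ d m ε : ℝ, 0 < m → 0 < ε → ∀ x h : ℝ, h ≠ 0 →
        min (m ^ ν) ((|x - d| / ε) ^ ν) * (1 - σ ν) ≤
          (1 / h) * ∫ t in x..(x + h), min (m ^ ν) ((|t - d| / ε) ^ ν) := by
  refine ⟨fun ν => 1 - cfun ν, ?_, ?_, ?_, ?_⟩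
  · -- membership in Ioc 0 1
    rintro ν ⟨hν0, hν1⟩
    have h1ν : (0:ℝ) < 1 + ν := by linarith
    have h1 := cfun_le_inv hν0
    have h2 := cfun_nonneg hν0
    refine ⟨?_, ?_⟩
    · show (0:ℝ) < 1 - cfun ν
      have : 1 / (1 + ν) < 1 := by rw [div_lt_one h1ν]; linarith
      linarith
    · show 1 - cfun ν ≤ 1
      linarith
  · -- tendsto
    apply tendsto_of_tendsto_of_tendsto_of_le_of_le' (g := fun _ : ℝ => (0:ℝ))
      (h := fun ν : ℝ => 2 * ν)
    · exact tendsto_const_nhds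
    · have hcont : Continuous (fun ν : ℝ => 2 * ν) := continuous_const.mul continuous_id
      have : Tendsto (fun ν : ℝ => 2 * ν) (nhds 0) (nhds 0) := by
        simpa using hcont.tendsto (0:ℝ)
      exact this.mono_left nhdsWithin_le_nhds
    · filter_upwards [self_mem_nhdsWithin] with ν hν
      have h1 := cfun_le_inv hν.1
      have : 1 / (1 + (ν:ℝ)) ≤ 1 := by
        rw [div_le_one (by linarith [hν.1] : (0:ℝ) < 1 + ν)]; linarith [hν.1]
      linarith
    · filter_upwards [self_mem_nhdsWithin] with ν hν
      obtain ⟨hν0, hν1⟩ := hν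
      have h1ν : (0:ℝ) < 1 + ν := by linarith
      have hlow := cfun_lower ⟨hν0, hν1⟩
      have hE : (Real.exp 1)⁻¹ ≤ 1 := by
        rw [inv_le_one_iff₀]
        right
        linarith [Real.add_one_le_exp (1:ℝ)]
      have hstep : 1 - cfun ν ≤ 1 - (1 - ν * (Real.exp 1)⁻¹) / (1 + ν) := by linarith
      have hstep2 : 1 - (1 - ν * (Real.exp 1)⁻¹) / (1 + ν) ≤ 2 * ν := by
        have hq : 1 - 2 * ν ≤ (1 - ν * (Real.exp 1)⁻¹) / (1 + ν) := by
          rw [le_div_iff₀ h1ν]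
          nlinarith [inv_pos.mpr (Real.exp_pos 1)]
        linarith
      linarith
  · -- formula
    intro ν _; rfl
  · -- main estimate
    rintro ν hν d m ε hm hε x h hh
    obtain ⟨hν0, hν1⟩ := hν
    set M := m ^ ν with hM
    have hMpos : 0 < M := Real.rpow_pos_of_pos hm ν
    have hfe : (fun t : ℝ => min M ((|t - d| / ε) ^ ν))
        = fun t : ℝ => min M (|(t - d) / ε| ^ ν) := by
      funext t; rw [abs_div, abs_of_pos hε]
    have hint1 : (∫ t in x..(x + h), min M ((|t - d| / ε) ^ ν))
        = ∫ s in (x - d)..(x + h - d), min M (|s / ε| ^ ν) := by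
      rw [hfe]
      exact intervalIntegral.integral_comp_sub_right (fun s => min M (|s / ε| ^ ν)) d
    have hint2 : (∫ s in (x - d)..(x + h - d), min M (|s / ε| ^ ν))
        = ε • ∫ w in ((x - d)/ε)..((x + h - d)/ε), min M (|w| ^ ν) :=
      intervalIntegral.integral_comp_div (fun w => min M (|w| ^ ν)) hε.ne'
    set u := (x - d) / ε with hu
    set k := h / ε with hk
    have hk0 : k ≠ 0 := div_ne_zero hh hε.ne'
    have huk : (x + h - d) / ε = u + k := by rw [hu, hk]; field_simp; ring
    have hKey := Kgen (u := u) (k := k) ⟨hν0, hν1⟩ hMpos hk0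
    have habs : |u| = |x - d| / ε := by rw [hu, abs_div, abs_of_pos hε]
    have hσ : 1 - (1 - cfun ν) = cfun ν := by ring
    rw [hσ, ← habs]
    calc min M (|u| ^ ν) * cfun ν
        ≤ (1/k) * ∫ w in u..(u + k), min M (|w| ^ ν) := hKey
      _ = (1/h) * ∫ t in x..(x + h), min M ((|t - d| / ε) ^ ν) := by
          rw [hint1, hint2, huk, smul_eq_mul, hk]
          rw [one_div_div]
          field_simp
end

section
/- Let C be a compact subset of [0,1] that is homeomorphic to the Cantor set {0,1}^ℕ (with the product topology). Then there exists a continuous map γ : [0,1] → ℝ² such that γ([0,1]) = γ(C) = 𝕋⁺, where 𝕋⁺ = {(a,b) ∈ ℝ² : 0 ≤ a ≤ b ≤ 1}. -/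
open Set

noncomputable def cantMap (f : ℕ → Bool) : ℝ :=
  ∑' n, (if f n then ((2:ℝ)⁻¹) ^ (n + 1) else 0)

lemma geom_summable : Summable (fun n : ℕ => ((2:ℝ)⁻¹) ^ (n + 1)) := by
  have h : Summable (fun n : ℕ => ((2:ℝ)⁻¹) ^ n) :=
    summable_geometric_of_lt_one (by norm_num) (by norm_num)
  exact (h.mul_left 2⁻¹).congr (fun n => by ring)

lemma cantMap_cont : Continuous cantMap := by
  apply continuous_tsum (u := fun n => ((2:ℝ)⁻¹) ^ (n + 1))
  · intro n
    exact (continuous_of_discreteTopology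
      (f := fun b : Bool => if b then ((2:ℝ)⁻¹) ^ (n+1) else 0)).comp (continuous_apply n)
  · exact geom_summable
  · intro n f
    by_cases h : f n <;> simp [h] <;> positivity

lemma cantMap_surj {x : ℝ} (hx : x ∈ Icc (0:ℝ) 1) : ∃ f, cantMap f = x := by
  obtain ⟨hx0, hx1⟩ := hx
  rcases eq_or_lt_of_le hx1 with h1 | h1
  · refine ⟨fun _ => true, ?_⟩
    have hthis : cantMap (fun _ => true) = ∑' n : ℕ, ((2:ℝ)⁻¹) ^ (n+1) := by
      unfold cantMap; simp
    rw [hthis, h1]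
    have hs : ∑' n : ℕ, ((2:ℝ)⁻¹) ^ (n+1) = 2⁻¹ * ∑' n : ℕ, ((2:ℝ)⁻¹) ^ n := by
      rw [← tsum_mul_left]; congr 1; ext n; ring
    rw [hs, tsum_geometric_of_lt_one (by norm_num) (by norm_num)]
    norm_num
  · -- x < 1
    set a : ℕ → ℕ := fun n => ⌊x * 2 ^ n⌋₊ with ha
    have hxn : ∀ n : ℕ, 0 ≤ x * 2 ^ n := fun n => by positivity
    have hfl : ∀ n : ℕ, (a n : ℝ) ≤ x * 2 ^ n ∧ x * 2 ^ n < a n + 1 := fun n =>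
      ⟨Nat.floor_le (hxn n), Nat.lt_floor_add_one _⟩
    have key : ∀ n : ℕ, a (n+1) = 2 * a n ∨ a (n+1) = 2 * a n + 1 := by
      intro n
      have hp : (2:ℝ) ^ (n+1) = 2 ^ n * 2 := pow_succ 2 n
      have h1' : (2 * a n : ℝ) ≤ x * 2 ^ (n+1) := by
        have := (hfl n).1; nlinarith
      have h2' : x * 2 ^ (n+1) < 2 * a n + 2 := by
        have := (hfl n).2; nlinarith
      have hle : 2 * a n ≤ a (n+1) := Nat.le_floor (by push_cast; linarith)
      have hlt : a (n+1) < 2 * a n + 2 := by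
        rw [ha]; exact Nat.floor_lt (hxn _) |>.mpr (by push_cast; linarith)
      omega
    set f : ℕ → Bool := fun n => decide (a (n+1) = 2 * a n + 1) with hf
    have hsum : ∀ N : ℕ,
        (∑ n ∈ Finset.range N, (if f n then ((2:ℝ)⁻¹) ^ (n+1) else 0)) = (a N : ℝ) / 2 ^ N := by
      intro N
      induction N with
      | zero => simp [ha, Nat.floor_eq_zero.mpr (by simpa using h1)]
      | succ N ih =>
        rw [Finset.sum_range_succ, ih]
        rcases key N with hk | hk
        · have hfN : f N = false := by
            simp only [hf, decide_eq_false_iff_not]; omega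
          rw [hfN]; simp only [Bool.false_eq_true, if_false, add_zero]
          rw [hk]; push_cast; ring
        · have hfN : f N = true := by
            simp only [hf]; exact decide_eq_true (by omega)
          rw [hfN]; simp only [if_true]
          rw [hk]; push_cast; simp only [inv_pow]; ring
    refine ⟨f, ?_⟩
    have hsummable : Summable (fun n => (if f n then ((2:ℝ)⁻¹) ^ (n+1) else 0)) := by
      refine Summable.of_nonneg_of_le (fun n => ?_) (fun n => ?_) geom_summable
      · by_cases h : f n <;> simp [h] <;> positivity
      · by_cases h : f n <;> simp [h] <;> positivity
    have hten := hsummable.hasSum.tendsto_sum_nat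
    have hten2 : Filter.Tendsto (fun N => (∑ n ∈ Finset.range N,
        (if f n then ((2:ℝ)⁻¹) ^ (n+1) else 0))) Filter.atTop (nhds x) := by
      refine tendsto_of_tendsto_of_tendsto_of_le_of_le
        (g := fun N : ℕ => x - ((2:ℝ)⁻¹) ^ N) (h := fun _ : ℕ => x)
        ?_ tendsto_const_nhds (fun N => ?_) (fun N => ?_)
      · have h0 : Filter.Tendsto (fun N : ℕ => ((2:ℝ)⁻¹) ^ N) Filter.atTop (nhds 0) :=
          tendsto_pow_atTop_nhds_zero_of_lt_one (by norm_num) (by norm_num)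
        simpa using (tendsto_const_nhds (x := x)).sub h0
      · rw [hsum N]
        have h2 : (0:ℝ) < 2 ^ N := by positivity
        have h3 : x ≤ (↑(a N) + 1) / 2 ^ N :=
          (le_div_iff₀ h2).mpr (by linarith [(hfl N).2])
        have h4 : (↑(a N) + 1) / 2 ^ N = (↑(a N) : ℝ)/2^N + ((2:ℝ)⁻¹)^N := by
          rw [inv_pow]; ring
        linarith
      · rw [hsum N]
        have h2 : (0:ℝ) < 2 ^ N := by positivity
        exact (div_le_iff₀ h2).mpr (hfl N).1
    exact tendsto_nhds_unique hten hten2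

noncomputable def cantMap2 (f : ℕ → Bool) : ℝ × ℝ :=
  (cantMap (fun n => f (2*n)), cantMap (fun n => f (2*n+1)))

lemma cantMap2_cont : Continuous cantMap2 := by
  refine Continuous.prodMk ?_ ?_ <;>
    exact cantMap_cont.comp (continuous_pi fun n => continuous_apply _)

lemma cantMap2_surj {p : ℝ × ℝ} (h1 : p.1 ∈ Icc (0:ℝ) 1) (h2 : p.2 ∈ Icc (0:ℝ) 1) :
    ∃ f, cantMap2 f = p := by
  obtain ⟨g, hg⟩ := cantMap_surj h1
  obtain ⟨h, hh⟩ := cantMap_surj h2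
  refine ⟨fun n => if n % 2 = 0 then g (n/2) else h (n/2), ?_⟩
  unfold cantMap2
  have e1 : (fun n => (if (2*n) % 2 = 0 then g ((2*n)/2) else h ((2*n)/2))) = g := by
    funext n
    have m1 : (2*n) % 2 = 0 := by omega
    have m2 : (2*n)/2 = n := by omega
    simp [m1, m2]
  have e2 : (fun n => (if (2*n+1) % 2 = 0 then g ((2*n+1)/2) else h ((2*n+1)/2))) = h := by
    funext n
    have m1 : (2*n+1) % 2 = 1 := by omega
    have m2 : (2*n+1)/2 = n := by omega
    simp [m1, m2]
  rw [e1, e2, hg, hh]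

noncomputable def triRetr (p : ℝ × ℝ) : ℝ × ℝ :=
  (min (max 0 (min p.1 1)) (max 0 (min p.2 1)), max (max 0 (min p.1 1)) (max 0 (min p.2 1)))

lemma triRetr_cont : Continuous triRetr := by
  unfold triRetr; fun_prop

lemma triRetr_mem (p : ℝ × ℝ) :
    triRetr p ∈ {q : ℝ × ℝ | 0 ≤ q.1 ∧ q.1 ≤ q.2 ∧ q.2 ≤ 1} := by
  refine ⟨le_min (le_max_left _ _) (le_max_left _ _), min_le_max, ?_⟩
  refine max_le (max_le (by norm_num) (min_le_right _ _)) (max_le (by norm_num) (min_le_right _ _))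

lemma triRetr_id {p : ℝ × ℝ} (hp : p ∈ {q : ℝ × ℝ | 0 ≤ q.1 ∧ q.1 ≤ q.2 ∧ q.2 ≤ 1}) :
    triRetr p = p := by
  obtain ⟨h1, h2, h3⟩ := hp
  have c1 : max 0 (min p.1 1) = p.1 := by
    rw [min_eq_left (by linarith), max_eq_right h1]
  have c2 : max 0 (min p.2 1) = p.2 := by
    rw [min_eq_left h3, max_eq_right (by linarith)]
  unfold triRetr
  rw [c1, c2, min_eq_left h2, max_eq_right h2]

/-- If `C ⊆ [0,1]` is compact and homeomorphic to the Cantor set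
`{0,1}^ℕ`, then there is a continuous curve `γ : [0,1] → ℝ²` with
`γ([0,1]) = γ(C) = 𝕋⁺ = {(a,b) : 0 ≤ a ≤ b ≤ 1}`. -/
theorem stmt_6 (C : Set ℝ) (hCcpt : IsCompact C) (hCsub : C ⊆ Icc 0 1)
    (hhomeo : Nonempty (C ≃ₜ (ℕ → Bool))) :
    ∃ γ : ℝ → ℝ × ℝ, ContinuousOn γ (Icc 0 1) ∧
      γ '' Icc 0 1 = {p : ℝ × ℝ | 0 ≤ p.1 ∧ p.1 ≤ p.2 ∧ p.2 ≤ 1} ∧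
      γ '' C = {p : ℝ × ℝ | 0 ≤ p.1 ∧ p.1 ≤ p.2 ∧ p.2 ≤ 1} := by
  obtain ⟨e⟩ := hhomeo
  have hCclosed : IsClosed C := hCcpt.isClosed
  let g : C(C, ℝ × ℝ) := ⟨fun c => cantMap2 (e c), cantMap2_cont.comp e.continuous⟩
  obtain ⟨G, hG⟩ := g.exists_restrict_eq hCclosed
  set γ : ℝ → ℝ × ℝ := fun t => triRetr (G t) with hγ
  have hGC : ∀ c : C, G (c : ℝ) = cantMap2 (e c) := fun c => ContinuousMap.congr_fun hG c
  have himC : γ '' C = {p : ℝ × ℝ | 0 ≤ p.1 ∧ p.1 ≤ p.2 ∧ p.2 ≤ 1} := by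
    apply Subset.antisymm
    · rintro q ⟨t, _, rfl⟩
      exact triRetr_mem _
    · rintro p hp
      obtain ⟨h1, h2, h3⟩ := hp
      obtain ⟨f, hfp⟩ := cantMap2_surj (p := p) ⟨h1, by linarith⟩ ⟨by linarith, h3⟩
      refine ⟨(e.symm f : ℝ), (e.symm f).2, ?_⟩
      have : G ((e.symm f : C) : ℝ) = cantMap2 (e (e.symm f)) := hGC (e.symm f)
      rw [hγ]
      simp only [this, e.apply_symm_apply, hfp]
      exact triRetr_id ⟨h1, h2, h3⟩
  refine ⟨γ, (triRetr_cont.comp G.continuous).continuousOn, ?_, himC⟩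
  apply Subset.antisymm
  · rintro q ⟨t, _, rfl⟩
    exact triRetr_mem _
  · rw [← himC]
    exact image_mono hCsub
end

section
/- Let N ≥ 1 and let x* ∈ ℝ^N satisfy ‖x*‖ < 1. Then there exists a continuously differentiable, 1-Lipschitz function h : ℝ^N → ℝ whose support is contained in the open unit ball B(0,1), and a real δ > 0, such that ∇h(x) = x* for all x ∈ B(0,δ). -/
open Set

set_option maxHeartbeats 2000000

theorem stmt_10_aux {E : Type*} [NormedAddCommGroup E] [InnerProductSpace ℝ E]
    [FiniteDimensional ℝ E] (xs : E) (hxs : ‖xs‖ < 1) :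
    ∃ h : E → ℝ,
      ContDiff ℝ 1 h ∧ LipschitzWith 1 h ∧
      tsupport h ⊆ Metric.ball (0 : E) 1 ∧
      ∃ δ : ℝ, 0 < δ ∧
        ∀ x ∈ Metric.ball (0 : E) δ, gradient h x = xs := by
  classical
  -- the outer bump function
  let χ : ContDiffBump (0 : E) := ⟨1/4, 1/2, by norm_num, by norm_num⟩
  have χcd : ContDiff ℝ 1 (χ : E → ℝ) := χ.contDiff
  have χdiff : Differentiable ℝ (χ : E → ℝ) := χcd.differentiable one_ne_zero
  -- bound on the derivative of χ
  obtain ⟨C, hC⟩ : ∃ C, ∀ x, ‖fderiv ℝ (χ : E → ℝ) x‖ ≤ C :=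
    (χ.hasCompactSupport.fderiv (𝕜 := ℝ)).exists_bound_of_continuous
      ((χ.contDiff (n := 1)).continuous_fderiv (by simp))
  have hC0 : (0 : ℝ) ≤ C := le_trans (norm_nonneg _) (hC 0)
  set C1 : ℝ := C + 1 with hC1def
  have hC1pos : 0 < C1 := by positivity
  have hC' : ∀ x, ‖fderiv ℝ (χ : E → ℝ) x‖ ≤ C1 := fun x => (hC x).trans (by linarith)
  set ε : ℝ := (1 - ‖xs‖) / C1 with hεdef
  have hεpos : 0 < ε := div_pos (by linarith) hC1pos
  have hεC1 : ε * C1 = 1 - ‖xs‖ := div_mul_cancel₀ _ hC1pos.ne'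
  -- the inner bump on ℝ
  let b : ContDiffBump (0 : ℝ) := ⟨ε/2, ε, by positivity, by linarith⟩
  have hbint : ∀ u v : ℝ, IntervalIntegrable (b : ℝ → ℝ) MeasureTheory.volume u v :=
    fun u v => (b.continuous.integrable_of_hasCompactSupport b.hasCompactSupport).intervalIntegrable
  set φ : ℝ → ℝ := fun t => ∫ s in (0:ℝ)..t, b s with hφdef
  have hφd : ∀ t, HasDerivAt φ (b t) t := fun t =>
    (b.continuous.integral_hasStrictDerivAt 0 t).hasDerivAt
  have hφcd : ContDiff ℝ 1 φ := by
    rw [contDiff_one_iff_deriv]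
    refine ⟨fun t => (hφd t).differentiableAt, ?_⟩
    have : deriv φ = fun t => b t := funext fun t => (hφd t).deriv
    rw [this]; exact b.continuous
  -- φ equals the identity near 0
  have hφid : ∀ t : ℝ, |t| ≤ ε/2 → φ t = t := by
    intro t ht
    have : ∫ s in (0:ℝ)..t, b s = ∫ s in (0:ℝ)..t, (1:ℝ) := by
      refine intervalIntegral.integral_congr fun s hs => ?_
      refine b.one_of_mem_closedBall ?_
      rw [Metric.mem_closedBall, Real.dist_eq, sub_zero]
      rcases Set.mem_uIcc.1 hs with h | h
      · have h1 : |s| ≤ |t| := by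
          rw [abs_of_nonneg h.1]
          exact h.2.trans (le_abs_self t)
        exact h1.trans ht
      · have h1 : |s| ≤ |t| := by
          rw [abs_of_nonpos h.2]
          exact le_trans (by linarith [h.1]) (neg_le_abs t)
        exact h1.trans ht
    simpa [hφdef] using this.trans (by simp)
  -- φ is bounded by ε
  have hφsmall : ∀ t : ℝ, |t| ≤ ε → |φ t| ≤ ε := by
    intro t ht
    have : ‖∫ s in (0:ℝ)..t, b s‖ ≤ 1 * |t - 0| := by
      refine intervalIntegral.norm_integral_le_of_norm_le_const fun s _ => ?_
      rw [Real.norm_eq_abs, abs_of_nonneg (b.nonneg' s)]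
      exact b.le_one
    simpa [hφdef, Real.norm_eq_abs] using this.trans (by simp [ht])
  have hφbound : ∀ t : ℝ, |φ t| ≤ ε := by
    intro t
    rcases le_total (|t|) ε with h | h
    · exact hφsmall t h
    rcases le_total 0 t with h0 | h0
    · have hεt : ε ≤ t := by rwa [abs_of_nonneg h0] at h
      have hz : ∫ s in ε..t, b s = 0 := by
        have : ∫ s in ε..t, b s = ∫ s in ε..t, (0:ℝ) := by
          refine intervalIntegral.integral_congr fun s hs => ?_
          rcases Set.mem_uIcc.1 hs with h | h
          · exact b.zero_of_le_dist (by rw [Real.dist_eq, sub_zero]; rw [abs_of_nonneg (hεpos.le.trans h.1)]; exact h.1)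
          · exact b.zero_of_le_dist (by rw [Real.dist_eq, sub_zero]; rw [abs_of_nonneg (le_trans (by linarith) h.1)]; linarith [h.2])
        simp [this]
      have hadd := intervalIntegral.integral_add_adjacent_intervals (hbint 0 ε) (hbint ε t)
      have hφt : φ t = φ ε := by
        rw [hφdef]; simp only [← hadd, hz, add_zero]
      rw [hφt]
      exact hφsmall ε (by rw [abs_of_nonneg hεpos.le])
    · have hεt : t ≤ -ε := by
        rw [abs_of_nonpos h0] at h; linarith
      have hz : ∫ s in (-ε)..t, b s = 0 := by
        have : ∫ s in (-ε)..t, b s = ∫ s in (-ε)..t, (0:ℝ) := by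
          refine intervalIntegral.integral_congr fun s hs => ?_
          rcases Set.mem_uIcc.1 hs with h | h
          · refine b.zero_of_le_dist ?_
            rw [Real.dist_eq, sub_zero, abs_of_nonpos (by linarith [h.2])]
            linarith [h.2]
          · refine b.zero_of_le_dist ?_
            rw [Real.dist_eq, sub_zero, abs_of_nonpos (h.2.trans (by linarith))]
            linarith [h.2]
        simp [this]
      have hadd := intervalIntegral.integral_add_adjacent_intervals (hbint 0 (-ε)) (hbint (-ε) t)
      have hφt : φ t = φ (-ε) := by
        rw [hφdef]; simp only [← hadd, hz, add_zero]
      rw [hφt]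
      exact hφsmall (-ε) (by rw [abs_neg, abs_of_nonneg hεpos.le])
  -- the linear functional ⟪xs, ·⟫
  set L : E →L[ℝ] ℝ := (InnerProductSpace.toDual ℝ E xs : E →L[ℝ] ℝ) with hLdef
  have hLnorm : ‖L‖ = ‖xs‖ := (InnerProductSpace.toDual ℝ E).norm_map xs
  -- the function h
  set h : E → ℝ := fun x => φ (L x) * χ x with hhdef
  have hcd : ContDiff ℝ 1 h := (hφcd.comp L.contDiff).mul (χ.contDiff (n := 1))
  -- derivative formula
  have hhd : ∀ x, HasFDerivAt h (φ (L x) • fderiv ℝ (χ : E → ℝ) x + χ x • (b (L x) • L)) x := by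
    intro x
    have h1 : HasFDerivAt (fun y => φ (L y)) (b (L x) • L) x :=
      (hφd (L x)).comp_hasFDerivAt x L.hasFDerivAt
    have h2 : HasFDerivAt (χ : E → ℝ) (fderiv ℝ (χ : E → ℝ) x) x :=
      (χdiff x).hasFDerivAt
    exact h1.mul h2
  have hdiff : Differentiable ℝ h := fun x => (hhd x).differentiableAt
  -- Lipschitz bound
  have hlip : LipschitzWith 1 h := by
    refine lipschitzWith_of_nnnorm_fderiv_le hdiff fun x => ?_
    have hfe : fderiv ℝ h x = φ (L x) • fderiv ℝ (χ : E → ℝ) x + χ x • (b (L x) • L) :=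
      (hhd x).fderiv
    have hnorm : ‖fderiv ℝ h x‖ ≤ 1 := by
      rw [hfe]
      refine ContinuousLinearMap.opNorm_le_bound _ zero_le_one fun v => ?_
      have happ : (φ (L x) • fderiv ℝ (χ : E → ℝ) x + χ x • (b (L x) • L)) v
          = φ (L x) * (fderiv ℝ (χ : E → ℝ) x v) + χ x * (b (L x) * L v) := by
        simp [ContinuousLinearMap.add_apply, ContinuousLinearMap.smul_apply, smul_eq_mul]
      rw [happ]
      have h1 : |fderiv ℝ (χ : E → ℝ) x v| ≤ C1 * ‖v‖ := by
        calc |fderiv ℝ (χ : E → ℝ) x v| = ‖fderiv ℝ (χ : E → ℝ) x v‖ := (Real.norm_eq_abs _).symm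
          _ ≤ ‖fderiv ℝ (χ : E → ℝ) x‖ * ‖v‖ := (fderiv ℝ (χ : E → ℝ) x).le_opNorm v
          _ ≤ C1 * ‖v‖ := mul_le_mul_of_nonneg_right (hC' x) (norm_nonneg v)
      have h2 : |L v| ≤ ‖xs‖ * ‖v‖ := by
        have := L.le_opNorm v
        rwa [hLnorm, Real.norm_eq_abs] at this
      have hχ0 : 0 ≤ χ x := χ.nonneg' x
      have hχ1 : χ x ≤ 1 := χ.le_one
      have hb0 : 0 ≤ b (L x) := b.nonneg' (L x)
      have hb1 : b (L x) ≤ 1 := b.le_one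
      have hφb : |φ (L x)| ≤ ε := hφbound _
      rw [Real.norm_eq_abs]
      calc |φ (L x) * (fderiv ℝ (χ : E → ℝ) x v) + χ x * (b (L x) * L v)|
          ≤ |φ (L x) * (fderiv ℝ (χ : E → ℝ) x v)| + |χ x * (b (L x) * L v)| := abs_add_le _ _
        _ = |φ (L x)| * |fderiv ℝ (χ : E → ℝ) x v| + χ x * (b (L x) * |L v|) := by
            rw [abs_mul, abs_mul, abs_mul, abs_of_nonneg hχ0, abs_of_nonneg hb0]
        _ ≤ ε * (C1 * ‖v‖) + 1 * (1 * (‖xs‖ * ‖v‖)) := by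
            have t1 : |φ (L x)| * |fderiv ℝ (χ : E → ℝ) x v| ≤ ε * (C1 * ‖v‖) :=
              mul_le_mul hφb h1 (abs_nonneg _) hεpos.le
            have t2 : χ x * (b (L x) * |L v|) ≤ 1 * (1 * (‖xs‖ * ‖v‖)) := by
              have : b (L x) * |L v| ≤ 1 * (‖xs‖ * ‖v‖) :=
                mul_le_mul hb1 h2 (abs_nonneg _) zero_le_one
              have := mul_le_mul hχ1 this (by positivity) zero_le_one
              linarith
            linarith
        _ = (ε * C1 + ‖xs‖) * ‖v‖ := by ring
        _ = 1 * ‖v‖ := by rw [hεC1]; ring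
    exact_mod_cast hnorm
  -- support
  have hsupp : tsupport h ⊆ Metric.ball (0 : E) 1 := by
    have h1 : Function.support h ⊆ Function.support (χ : E → ℝ) :=
      Function.support_mul_subset_right _ _
    have h2 : tsupport h ⊆ tsupport (χ : E → ℝ) := closure_mono h1
    refine h2.trans ?_
    rw [χ.tsupport_eq]
    exact Metric.closedBall_subset_ball (by norm_num)
  refine ⟨h, hcd, hlip, hsupp, min (1/4) ((ε/2) / (‖xs‖ + 1)), ?_, ?_⟩
  · have : 0 < (ε/2) / (‖xs‖ + 1) := by positivity
    positivity
  · intro x hx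
    set δ : ℝ := min (1/4) ((ε/2) / (‖xs‖ + 1)) with hδdef
    have hδ1 : δ ≤ 1/4 := min_le_left _ _
    have hδ2 : δ ≤ (ε/2) / (‖xs‖ + 1) := min_le_right _ _
    -- h coincides with L on the ball of radius δ
    have hEq : ∀ y ∈ Metric.ball (0 : E) δ, h y = L y := by
      intro y hy
      have hny : ‖y‖ < δ := by simpa [Metric.mem_ball, dist_eq_norm] using hy
      have hχ : χ y = 1 := χ.one_of_mem_closedBall (by
        rw [Metric.mem_closedBall, dist_zero_right]
        calc ‖y‖ ≤ δ := hny.le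
          _ ≤ 1/4 := hδ1)
      have hLy : |L y| ≤ ε/2 := by
        have h1 : ‖L y‖ ≤ ‖L‖ * ‖y‖ := L.le_opNorm y
        rw [hLnorm] at h1
        rw [Real.norm_eq_abs] at h1
        calc |L y| ≤ ‖xs‖ * ‖y‖ := h1
          _ ≤ (‖xs‖ + 1) * ((ε/2) / (‖xs‖ + 1)) := by
              refine mul_le_mul (by linarith) (hny.le.trans hδ2) (norm_nonneg _) (by positivity)
          _ = ε/2 := by field_simp
      rw [hhdef]
      simp only
      rw [hχ, hφid _ hLy, mul_one]
    have hmem : Metric.ball (0 : E) δ ∈ nhds x := Metric.isOpen_ball.mem_nhds hx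
    have hev : h =ᶠ[nhds x] (L : E → ℝ) := Filter.eventuallyEq_of_mem hmem hEq
    have hL : HasFDerivAt h L x := L.hasFDerivAt.congr_of_eventuallyEq hev
    have hg : HasGradientAt h xs x := hasGradientAt_iff_hasFDerivAt.mpr hL
    exact hg.gradient

/-- **Lemma.** For `N ≥ 1` and `x* ∈ ℝ^N` with `‖x*‖ < 1`, there is a
continuously differentiable, `1`-Lipschitz `h : ℝ^N → ℝ` with support contained in the open
unit ball, and `δ > 0`, such that `∇h(x) = x*` on `B(0,δ)`. -/
theorem stmt_10 (N : ℕ) (hN : 1 ≤ N) (xs : EuclideanSpace ℝ (Fin N)) (hxs : ‖xs‖ < 1) :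
    ∃ h : EuclideanSpace ℝ (Fin N) → ℝ,
      ContDiff ℝ 1 h ∧ LipschitzWith 1 h ∧
      tsupport h ⊆ Metric.ball (0 : EuclideanSpace ℝ (Fin N)) 1 ∧
      ∃ δ : ℝ, 0 < δ ∧
        ∀ x ∈ Metric.ball (0 : EuclideanSpace ℝ (Fin N)) δ, gradient h x = xs := by
  exact stmt_10_aux xs hxs
end

section
/- Let Y be a linear subspace of the space C([0,1], ℝ) of continuous real-valued functions on [0,1] with the supremum norm, such that every element of Y is a Lipschitz function and Y is closed in (C([0,1],ℝ), ‖·‖_∞). Then Y is finite dimensional. -/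
set_option maxHeartbeats 1000000
set_option synthInstance.maxHeartbeats 200000

open Set BoundedContinuousFunction

/-- A linear subspace of `C([0,1], ℝ)` (with the supremum norm) which
consists of Lipschitz functions and is closed in the supremum norm is finite dimensional. -/
theorem stmt_18 (Y : Submodule ℝ C(↥(Icc (0:ℝ) 1), ℝ))
    (hLip : ∀ f ∈ Y, ∃ L : NNReal, LipschitzWith L f)
    (hclosed : IsClosed (Y : Set C(↥(Icc (0:ℝ) 1), ℝ))) :
    FiniteDimensional ℝ Y := by
  set α := ↥(Icc (0:ℝ) 1) with hα
  haveI : CompleteSpace Y := hclosed.completeSpace_coe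
  -- the sets of n-Lipschitz elements of Y
  set S : ℕ → Set Y := fun n => {f : Y | LipschitzWith n ⇑(f : C(α, ℝ))} with hS
  have hev : ∀ z : α, Continuous fun f : Y => (f : C(α, ℝ)) z := fun z =>
    (continuous_eval_const z).comp continuous_subtype_val
  have hclS : ∀ n : ℕ, IsClosed (S n) := by
    intro n
    have : S n = ⋂ (x : α) (y : α),
        {f : Y | dist ((f : C(α, ℝ)) x) ((f : C(α, ℝ)) y) ≤ (n : ℝ) * dist x y} := by
      ext f
      simp only [hS, Set.mem_setOf_eq, Set.mem_iInter, lipschitzWith_iff_dist_le_mul,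
        NNReal.coe_natCast]
      exact Iff.rfl
    rw [this]
    exact isClosed_iInter fun x => isClosed_iInter fun y =>
      isClosed_le ((hev x).dist (hev y)) (continuous_const.mul continuous_const)
  have hcover : (⋃ n, S n) = univ := by
    refine eq_univ_iff_forall.mpr fun f => Set.mem_iUnion.mpr ?_
    obtain ⟨L, hL⟩ := hLip f f.2
    refine ⟨⌈(L : ℝ)⌉₊, hL.weaken ?_⟩
    rw [← NNReal.coe_le_coe]
    exact_mod_cast Nat.le_ceil (L : ℝ)
  obtain ⟨n, x0, hx0⟩ := nonempty_interior_of_iUnion_of_closed hclS hcover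
  rw [mem_interior_iff_mem_nhds, Metric.mem_nhds_iff] at hx0
  obtain ⟨ε, hε, hball⟩ := hx0
  -- every small element of Y is (2n)-Lipschitz
  have hsmall : ∀ g : Y, ‖g‖ < ε → LipschitzWith (2 * n) ⇑(g : C(α, ℝ)) := by
    intro g hg
    have h1 : x0 + g ∈ S n := hball (by
      simpa [dist_eq_norm] using hg)
    have h0 : x0 ∈ S n := hball (by simpa using hε)
    have : ⇑(g : C(α, ℝ)) = (fun x => ((x0 + g : Y) : C(α, ℝ)) x - (x0 : C(α, ℝ)) x) := by
      funext x; simp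
    rw [this]
    exact (LipschitzWith.sub h1 h0).weaken (le_of_eq (two_mul _).symm)
  -- consequently elements of the unit ball satisfy a uniform Lipschitz estimate
  have hunif : ∀ g : Y, ‖g‖ ≤ 1 → ∀ x y : α,
      dist ((g : C(α, ℝ)) x) ((g : C(α, ℝ)) y) ≤ (4 * n / ε) * dist x y := by
    intro g hg x y
    have hn : ‖(ε / 2) • g‖ < ε := by
      have h1 : ‖(ε / 2) • g‖ = ‖(ε/2 : ℝ)‖ * ‖g‖ := norm_smul (ε/2) (g : C(α, ℝ))
      rw [h1, Real.norm_eq_abs, abs_of_pos (by positivity : (0:ℝ) < ε/2)]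
      nlinarith [norm_nonneg g]
    have hL := (hsmall _ hn).dist_le_mul x y
    have hx : (((((ε / 2) • g : Y)) : C(α, ℝ)) x) = (ε / 2) * ((g : C(α, ℝ)) x) := by simp
    have hy : (((((ε / 2) • g : Y)) : C(α, ℝ)) y) = (ε / 2) * ((g : C(α, ℝ)) y) := by simp
    rw [hx, hy, Real.dist_eq, ← mul_sub, abs_mul,
      abs_of_pos (by positivity : (0:ℝ) < ε / 2)] at hL
    rw [Real.dist_eq]
    have h2 : ((2 * n : NNReal) : ℝ) = 2 * n := by push_cast; ring
    rw [h2] at hL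
    have := (mul_le_mul_iff_right₀ (by positivity : (0:ℝ) < 2 / ε)).mpr hL
    calc |(g : C(α, ℝ)) x - (g : C(α, ℝ)) y|
        = (2 / ε) * ((ε / 2) * |(g : C(α, ℝ)) x - (g : C(α, ℝ)) y|) := by
          field_simp
      _ ≤ (2 / ε) * (2 * n * dist x y) := this
      _ = (4 * n / ε) * dist x y := by field_simp; ring
  -- the closed unit ball of Y is compact via Arzelà–Ascoli
  have hcomp : IsCompact (Metric.closedBall (0 : Y) 1) := by
    rw [Subtype.isCompact_iff]
    set A : Set C(α, ℝ) := Subtype.val '' Metric.closedBall (0 : Y) 1 with hA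
    have hAmem : ∀ f ∈ A, f ∈ Y ∧ ‖f‖ ≤ 1 := by
      rintro f ⟨g, hg, rfl⟩
      exact ⟨g.2, by simpa [dist_eq_norm] using hg⟩
    have hAeq : A = (Y : Set C(α, ℝ)) ∩ Metric.closedBall 0 1 := by
      ext f
      constructor
      · intro hf
        exact ⟨(hAmem f hf).1, by simpa [dist_eq_norm] using (hAmem f hf).2⟩
      · rintro ⟨h1, h2⟩
        exact ⟨⟨f, h1⟩, by simpa [dist_eq_norm] using h2, rfl⟩
    -- transfer to bounded continuous functions
    set e := ContinuousMap.equivBoundedOfCompact α ℝ with he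
    have hiso : Isometry e := (ContinuousMap.isometryEquivBoundedOfCompact α ℝ).isometry
    set B : Set (α →ᵇ ℝ) := e '' A with hB
    have hBcomp : IsCompact B := by
      apply BoundedContinuousFunction.arzela_ascoli₂ (Icc (-1 : ℝ) 1) isCompact_Icc
      · -- closed
        have hAcl : IsClosed A := by
          rw [hAeq]; exact hclosed.inter Metric.isClosed_closedBall
        exact (ContinuousMap.isometryEquivBoundedOfCompact α ℝ).toHomeomorph.isClosedMap A hAcl
      · -- range in Icc
        rintro f x ⟨g, hg, rfl⟩
        have h1 := (hAmem g hg).2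
        have hb := BoundedContinuousFunction.norm_coe_le_norm (e g) x
        have h2 : ‖e g‖ = ‖g‖ := BoundedContinuousFunction.norm_mkOfCompact g
        rw [h2] at hb
        have : |e g x| ≤ 1 := le_trans (by simpa using hb) h1
        exact abs_le.mp this |> fun h => ⟨h.1, h.2⟩
      · -- equicontinuous
        apply Metric.equicontinuous_of_continuity_modulus (fun t => (4 * n / ε) * t)
        · exact ((continuous_const.mul continuous_id).tendsto' 0 0 (by simp)).mono_left le_rfl
        · rintro x y ⟨f, hf⟩
          obtain ⟨g, hg, rfl⟩ := hf
          obtain ⟨g', hg', rfl⟩ := hg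
          have h1 : ‖g'‖ ≤ 1 := by simpa [dist_eq_norm] using hg'
          exact hunif g' h1 x y
    have : A = e.symm '' B := by rw [hB]; simp
    rw [this]
    exact hBcomp.image (ContinuousMap.isometryEquivBoundedOfCompact α ℝ).symm.continuous
  exact FiniteDimensional.of_isCompact_closedBall₀ ℝ one_pos hcomp
end
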